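/- arXiv:1009.3513 — 9 statements merged into one kernel-verified Lean document; each statement's English description precedes it below -/
import Mathlib

section
/- Let ν ≥ 0. There exists a constant c = c(ν) ≥ 1 such that for all real numbers 0 ≤ a < b and all d > 0 one has c⁻¹·G ≤ ∫_a^b u^ν e^{−d·u} du ≤ c·G, where G = b^ν · ((a + 1/d)/(b + 1/d))^ν · e^{−a·d} · (b − a)/(d·(b − a) + 1). -/
open MeasureTheory Real Set

/-!
Put `L = min (b - a) (1 / d)`. The integral is comparable to `(a + L) ^ ν * exp (-(a * d)) * L`:
on `[a + L / 2, a + L]` the integrand is at least `(a + L) ^ ν * exp (-(a * d)) / (2 ^ ν * exp 1)`,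
and after the substitution `u = a + L * (t - 1)` it is dominated by a multiple of
the Gamma integrand `exp (-t) * t ^ ν`. The closed form agrees with the same quantity up to
`2 ^ (ν + 1)`, since `b * (a + 1/d) / (b + 1/d)` and `(b - a) * (1/d) / (b - a + 1/d)` lie within
a factor `2` below `min b (a + 1/d) = a + L` and `L` respectively.
-/

theorem integral_exp_neg_mul_rpow_le_Gamma {ν s t : ℝ} (hν : -1 < ν) (hs : 0 ≤ s) (hst : s ≤ t) :
    ∫ x in s..t, exp (-x) * x ^ ν ≤ Gamma (ν + 1) := by
  have hν1 : 0 < ν + 1 := by linarith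
  rw [Gamma_eq_integral hν1, add_sub_cancel_right, intervalIntegral.integral_of_le hst]
  refine setIntegral_mono_set (by simpa using GammaIntegral_convergent hν1) ?_ ?_
  · filter_upwards [ae_restrict_mem measurableSet_Ioi] with x hx
    exact mul_nonneg (exp_pos _).le (rpow_nonneg (le_of_lt hx) _)
  · exact (Ioc_subset_Ioi_self.trans (Ioi_subset_Ioi hs)).eventuallyLE

theorem continuous_rpow_mul_exp_neg_mul {ν : ℝ} (hν : 0 ≤ ν) (d : ℝ) :
    Continuous fun u : ℝ => u ^ ν * exp (-(d * u)) := by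
  fun_prop (disch := exact hν)

theorem rpow_mul_exp_neg_mul_le {ν a d L u : ℝ} (hν : 0 ≤ ν) (ha : 0 ≤ a) (hd : 0 < d)
    (hL : 0 < L) (hau : a ≤ u) (hLmin : min (u - a) (1 / d) ≤ L) :
    u ^ ν * exp (-(d * u)) ≤
      exp 1 ^ 2 * ((a + L) ^ ν * exp (-(a * d))) *
        (exp (-((u - a) / L + 1)) * ((u - a) / L + 1) ^ ν) := by
  have ht : 0 ≤ (u - a) / L := div_nonneg (sub_nonneg.mpr hau) hL.le
  have hpow : u ≤ (a + L) * ((u - a) / L + 1) := by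
    have : (a + L) * ((u - a) / L + 1) = u + L + a * ((u - a) / L) := by field_simp; ring
    nlinarith
  have hdecay : (u - a) / L ≤ 1 + d * (u - a) := by
    rw [div_le_iff₀ hL]
    rcases min_choice (u - a) (1 / d) with h | h <;> rw [h] at hLmin
    · nlinarith [mul_nonneg (mul_nonneg hd.le (sub_nonneg.mpr hau)) hL.le]
    · rw [div_le_iff₀ hd] at hLmin; nlinarith
  calc u ^ ν * exp (-(d * u))
      ≤ ((a + L) * ((u - a) / L + 1)) ^ ν * exp (-(a * d) + 2 - ((u - a) / L + 1)) :=
        mul_le_mul (rpow_le_rpow (ha.trans hau) hpow hν) (exp_le_exp.mpr (by linarith))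
          (exp_pos _).le (by positivity)
    _ = _ := by
        have hexp : exp (-(a * d) + 2 - ((u - a) / L + 1))
            = exp 1 ^ 2 * exp (-(a * d)) * exp (-((u - a) / L + 1)) := by
          rw [exp_one_pow, ← exp_add, ← exp_add]; ring_nf
        rw [mul_rpow (by positivity) (by positivity), hexp]; ring

theorem le_integral_rpow_mul_exp_neg_mul {ν a b d L : ℝ} (hν : 0 ≤ ν) (ha : 0 ≤ a) (hd : 0 < d)
    (hL : 0 < L) (hLmin : L ≤ min (b - a) (1 / d)) :
    (a + L) ^ ν * exp (-(a * d)) * L ≤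
      2 ^ (ν + 1) * exp 1 * ∫ u in a..b, u ^ ν * exp (-(d * u)) := by
  have hLb : a + L ≤ b := by linarith [min_le_left (b - a) (1 / d)]
  have hdL : d * L ≤ 1 := by
    rw [mul_comm, ← le_div_iff₀ hd]; exact hLmin.trans (min_le_right _ _)
  set m := ((a + L) / 2) ^ ν * exp (-(a * d) - 1) with hm_def
  have hm : ∀ u ∈ Icc (a + L / 2) (a + L), m ≤ u ^ ν * exp (-(d * u)) := fun u hu =>
    mul_le_mul (rpow_le_rpow (by positivity) (by linarith [hu.1]) hν)
      (exp_le_exp.mpr (by nlinarith [hu.2])) (exp_pos _).le (rpow_nonneg (by linarith [hu.1]) _)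
  have hmid : L / 2 * m ≤ ∫ u in (a + L / 2)..(a + L), u ^ ν * exp (-(d * u)) := by
    have := intervalIntegral.integral_mono_on (by linarith)
      (intervalIntegrable_const (μ := volume))
      ((continuous_rpow_mul_exp_neg_mul hν d).intervalIntegrable _ _) hm
    rwa [intervalIntegral.integral_const, smul_eq_mul, add_sub_add_left_eq_sub, sub_half] at this
  have hsub : ∫ u in (a + L / 2)..(a + L), u ^ ν * exp (-(d * u))
      ≤ ∫ u in a..b, u ^ ν * exp (-(d * u)) := by
    refine intervalIntegral.integral_mono_interval (by linarith) (by linarith) hLb ?_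
      ((continuous_rpow_mul_exp_neg_mul hν d).intervalIntegrable _ _)
    filter_upwards [ae_restrict_mem measurableSet_Ioc] with u hu
    exact mul_nonneg (rpow_nonneg (ha.trans hu.1.le) _) (exp_pos _).le
  have hscale : (a + L) ^ ν * exp (-(a * d)) * L = 2 ^ (ν + 1) * exp 1 * (L / 2 * m) := by
    rw [hm_def, div_rpow (by positivity) zero_le_two, rpow_add_one two_ne_zero, exp_sub]
    field_simp
  rw [hscale]
  gcongr
  exact hmid.trans hsub

theorem integral_rpow_mul_exp_neg_mul_le {ν a b d L : ℝ} (hν : 0 ≤ ν) (ha : 0 ≤ a) (hab : a ≤ b)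
    (hd : 0 < d) (hL : 0 < L) (hLmin : min (b - a) (1 / d) ≤ L) :
    ∫ u in a..b, u ^ ν * exp (-(d * u)) ≤
      exp 1 ^ 2 * Gamma (ν + 1) * ((a + L) ^ ν * exp (-(a * d)) * L) := by
  set φ : ℝ → ℝ := fun t => exp (-t) * t ^ ν
  set C := exp 1 ^ 2 * ((a + L) ^ ν * exp (-(a * d)))
  have hsubst : ∫ u in a..b, φ ((u - a) / L + 1) = L * ∫ t in (1 : ℝ)..(b - a) / L + 1, φ t := by
    have h := intervalIntegral.integral_comp_div_add φ hL.ne' (1 - a / L) (a := a) (b := b)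
    rw [show a / L + (1 - a / L) = 1 by ring, show b / L + (1 - a / L) = (b - a) / L + 1 by ring,
      smul_eq_mul] at h
    rw [← h]
    congr 1; funext u; congr 1; ring
  have hΓ : ∫ t in (1 : ℝ)..(b - a) / L + 1, φ t ≤ Gamma (ν + 1) :=
    integral_exp_neg_mul_rpow_le_Gamma (by linarith) zero_le_one
      (le_add_of_nonneg_left (div_nonneg (sub_nonneg.mpr hab) hL.le))
  calc ∫ u in a..b, u ^ ν * exp (-(d * u))
      ≤ ∫ u in a..b, C * φ ((u - a) / L + 1) := by
        refine intervalIntegral.integral_mono_on hab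
          ((continuous_rpow_mul_exp_neg_mul hν d).intervalIntegrable _ _)
          (Continuous.intervalIntegrable (by fun_prop (disch := exact hν)) _ _) fun u hu => ?_
        exact rpow_mul_exp_neg_mul_le hν ha hd hL hu.1
          ((min_le_min_right _ (by linarith [hu.2])).trans hLmin)
    _ = C * (L * ∫ t in (1 : ℝ)..(b - a) / L + 1, φ t) := by
        rw [intervalIntegral.integral_const_mul, hsubst]
    _ ≤ C * (L * Gamma (ν + 1)) := by gcongr
    _ = _ := by ring

theorem mul_div_le_min {x y s : ℝ} (hx : 0 ≤ x) (hy : 0 ≤ y) (hs : max x y ≤ s) :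
    x * y / s ≤ min x y := by
  rcases le_total x y with h | h
  · rw [min_eq_left h]; rw [max_eq_right h] at hs
    exact div_le_of_le_mul₀ (hy.trans hs) hx (by nlinarith)
  · rw [min_eq_right h]; rw [max_eq_left h] at hs
    exact div_le_of_le_mul₀ (hx.trans hs) hy (by nlinarith)

theorem min_le_two_mul_mul_div {x y s : ℝ} (hx : 0 ≤ x) (hy : 0 ≤ y) (hs : 0 < s)
    (hsxy : s ≤ x + y) : min x y ≤ 2 * (x * y / s) := by
  rw [mul_div_assoc', le_div_iff₀ hs]
  rcases le_total x y with h | h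
  · rw [min_eq_left h]; nlinarith
  · rw [min_eq_right h]; nlinarith

noncomputable def closedForm (ν a b d : ℝ) : ℝ :=
  (b ^ ν * ((a + 1/d) / (b + 1/d)) ^ ν * exp (-(a * d)) * (b - a)) / (d * (b - a) + 1)

theorem closedForm_eq {ν a b d : ℝ} (ha : 0 ≤ a) (hab : a < b) (hd : 0 < d) :
    closedForm ν a b d =
      (b * (a + 1 / d) / (b + 1 / d)) ^ ν * exp (-(a * d)) *
        ((b - a) * (1 / d) / (b - a + 1 / d)) := by
  have hb : 0 < b := ha.trans_lt hab
  have hR : (b - a) / (d * (b - a) + 1) = (b - a) * (1 / d) / (b - a + 1 / d) := by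
    field_simp
  rw [closedForm, mul_div_assoc, hR, ← mul_rpow hb.le (by positivity), ← mul_div_assoc b]

theorem closedForm_nonneg {ν a b d : ℝ} (ha : 0 ≤ a) (hab : a < b) (hd : 0 < d) :
    0 ≤ closedForm ν a b d := by
  have hb : 0 < b := ha.trans_lt hab
  have hba : 0 < b - a := by linarith
  rw [closedForm_eq ha hab hd]
  positivity

theorem add_min_sub_eq (a b e : ℝ) : a + min (b - a) e = min b (a + e) := by
  rw [← min_add_add_left, add_sub_cancel]

theorem closedForm_le {ν a b d : ℝ} (hν : 0 ≤ ν) (ha : 0 ≤ a) (hab : a < b) (hd : 0 < d) :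
    closedForm ν a b d ≤
      (a + min (b - a) (1 / d)) ^ ν * exp (-(a * d)) * min (b - a) (1 / d) := by
  have hd' : 0 < 1 / d := by positivity
  have hb : 0 < b := ha.trans_lt hab
  have hba : 0 < b - a := by linarith
  have hM : b * (a + 1 / d) / (b + 1 / d) ≤ min b (a + 1 / d) :=
    mul_div_le_min (by linarith) (by positivity) (max_le (by linarith) (by linarith))
  have hR : (b - a) * (1 / d) / (b - a + 1 / d) ≤ min (b - a) (1 / d) :=
    mul_div_le_min (by linarith) hd'.le (max_le (by linarith) (by linarith))
  rw [closedForm_eq ha hab hd, add_min_sub_eq]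
  exact mul_le_mul (mul_le_mul_of_nonneg_right
    (rpow_le_rpow (div_nonneg (by positivity) (by positivity)) hM hν) (exp_pos _).le)
    hR (div_nonneg (mul_nonneg hba.le hd'.le) (by linarith)) (by positivity)

theorem le_two_rpow_mul_closedForm {ν a b d : ℝ} (hν : 0 ≤ ν) (ha : 0 ≤ a) (hab : a < b)
    (hd : 0 < d) :
    (a + min (b - a) (1 / d)) ^ ν * exp (-(a * d)) * min (b - a) (1 / d) ≤
      2 ^ (ν + 1) * closedForm ν a b d := by
  have hd' : 0 < 1 / d := by positivity
  have hb : 0 < b := ha.trans_lt hab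
  have hba : 0 < b - a := by linarith
  have hM : min b (a + 1 / d) ≤ 2 * (b * (a + 1 / d) / (b + 1 / d)) :=
    min_le_two_mul_mul_div (by linarith) (by positivity) (by positivity) (by linarith)
  have hR : min (b - a) (1 / d) ≤ 2 * ((b - a) * (1 / d) / (b - a + 1 / d)) :=
    min_le_two_mul_mul_div (by linarith) hd'.le (by linarith) le_rfl
  rw [closedForm_eq ha hab hd, add_min_sub_eq]
  calc min b (a + 1 / d) ^ ν * exp (-(a * d)) * min (b - a) (1 / d)
      ≤ (2 * (b * (a + 1 / d) / (b + 1 / d))) ^ ν * exp (-(a * d)) *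
          (2 * ((b - a) * (1 / d) / (b - a + 1 / d))) :=
        mul_le_mul (mul_le_mul_of_nonneg_right
          (rpow_le_rpow (le_min (by linarith) (by positivity)) hM hν) (exp_pos _).le)
          hR (le_min hba.le hd'.le) (by positivity)
    _ = _ := by
        rw [mul_rpow zero_le_two (by positivity), rpow_add_one two_ne_zero]; ring

theorem stmt_0 (ν : ℝ) (hν : 0 ≤ ν) :
    ∃ c : ℝ, 1 ≤ c ∧ ∀ a b d : ℝ, 0 ≤ a → a < b → 0 < d →
      c⁻¹ * ((b ^ ν * ((a + 1/d) / (b + 1/d)) ^ ν * Real.exp (-(a * d)) * (b - a)) /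
          (d * (b - a) + 1))
        ≤ (∫ u in a..b, u ^ ν * Real.exp (-(d * u))) ∧
      (∫ u in a..b, u ^ ν * Real.exp (-(d * u)))
        ≤ c * ((b ^ ν * ((a + 1/d) / (b + 1/d)) ^ ν * Real.exp (-(a * d)) * (b - a)) /
          (d * (b - a) + 1)) := by
  have h2 : 1 ≤ (2 : ℝ) ^ (ν + 1) := one_le_rpow one_le_two (by linarith)
  have hΓ : 0 < Gamma (ν + 1) := Gamma_pos_of_pos (by linarith)
  have he : 1 ≤ exp 1 := one_le_exp zero_le_one
  refine ⟨2 ^ (ν + 1) * (exp 1 + exp 1 ^ 2 * Gamma (ν + 1)),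
    one_le_mul_of_one_le_of_one_le h2 (by nlinarith), fun a b d ha hab hd => ?_⟩
  have hL : 0 < min (b - a) (1 / d) := lt_min (by linarith) (by positivity)
  have hI : 0 ≤ ∫ u in a..b, u ^ ν * exp (-(d * u)) :=
    intervalIntegral.integral_nonneg hab.le fun u hu =>
      mul_nonneg (rpow_nonneg (ha.trans hu.1) _) (exp_pos _).le
  have hlow := le_integral_rpow_mul_exp_neg_mul hν ha hd hL le_rfl
  have hup := integral_rpow_mul_exp_neg_mul_le hν ha hab.le hd hL le_rfl
  constructor
  · rw [inv_mul_le_iff₀ (by positivity)]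
    calc closedForm ν a b d ≤ _ := closedForm_le hν ha hab hd
      _ ≤ _ := hlow
      _ ≤ _ := by gcongr; exact le_add_of_nonneg_right (by positivity)
  · calc _ ≤ _ := hup
      _ ≤ exp 1 ^ 2 * Gamma (ν + 1) * (2 ^ (ν + 1) * closedForm ν a b d) :=
          mul_le_mul_of_nonneg_left (le_two_rpow_mul_closedForm hν ha hab hd) (by positivity)
      _ = 2 ^ (ν + 1) * (exp 1 ^ 2 * Gamma (ν + 1)) * closedForm ν a b d := by ring
      _ ≤ 2 ^ (ν + 1) * (exp 1 + exp 1 ^ 2 * Gamma (ν + 1)) * closedForm ν a b d := by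
          gcongr
          · exact closedForm_nonneg ha hab hd
          · exact le_add_of_nonneg_left (by positivity)
end

section
/- Let ν ≥ 0. There exists a constant c = c(ν) ≥ 1 such that for all real numbers 0 ≤ a < b with b ≥ 1 one has c⁻¹ · e^{−a}(a^ν + 1)·min(b − a, 1) ≤ ∫_a^b u^ν e^{−u} du ≤ c · e^{−a}(a^ν + 1)·min(b − a, 1). -/
open MeasureTheory Real

private lemma integ_Ioi {ν : ℝ} (hν : 0 ≤ ν) :
    IntegrableOn (fun u : ℝ => u ^ ν * Real.exp (-u)) (Set.Ioi 0) := by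
  have h := Real.GammaIntegral_convergent (s := ν + 1) (by linarith)
  simpa [add_sub_cancel_right, mul_comm] using h

private lemma ii_f {ν : ℝ} (hν : 0 ≤ ν) {a b : ℝ} (ha : 0 ≤ a) (hab : a ≤ b) :
    IntervalIntegrable (fun u : ℝ => u ^ ν * Real.exp (-u)) volume a b := by
  rw [intervalIntegrable_iff, Set.uIoc_of_le hab]
  exact (integ_Ioi hν).mono_set (fun x hx => lt_of_le_of_lt ha hx.1)

private lemma two_rpow_split {ν : ℝ} (hν : 0 ≤ ν) {a t : ℝ} (ha : 0 ≤ a) (ht : 0 ≤ t) :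
    (a + t) ^ ν ≤ 2 ^ ν * (a ^ ν + t ^ ν) := by
  have h1 : a + t ≤ 2 * max a t := by
    rcases le_total a t with h | h
    · simp [max_eq_right h]; linarith
    · simp [max_eq_left h]; linarith
  have h2 : (a + t) ^ ν ≤ (2 * max a t) ^ ν :=
    Real.rpow_le_rpow (by linarith) h1 hν
  have h3 : (2 * max a t) ^ ν = 2 ^ ν * (max a t) ^ ν :=
    Real.mul_rpow (by norm_num) (le_max_of_le_left ha)
  have h4 : (max a t) ^ ν ≤ a ^ ν + t ^ ν := by
    rcases le_total a t with h | h
    · rw [max_eq_right h]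
      have := Real.rpow_nonneg ha ν
      linarith
    · rw [max_eq_left h]
      have := Real.rpow_nonneg ht ν
      linarith
  calc (a + t) ^ ν ≤ 2 ^ ν * (max a t) ^ ν := by rw [← h3]; exact h2
    _ ≤ 2 ^ ν * (a ^ ν + t ^ ν) :=
        mul_le_mul_of_nonneg_left h4 (Real.rpow_nonneg (by norm_num) ν)

private lemma tail_bound {ν : ℝ} (hν : 0 ≤ ν) {a d : ℝ} (ha : 0 ≤ a) (hd : 0 ≤ d) :
    (∫ t in (0:ℝ)..d, (a + t) ^ ν * Real.exp (-(a + t)))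
      ≤ Real.exp (-a) * (2 ^ ν * (a ^ ν + Real.Gamma (ν + 1))) := by
  have hint1 : IntervalIntegrable (fun t : ℝ => (a + t) ^ ν * Real.exp (-(a + t)))
      volume 0 d := by
    have := (ii_f hν ha (by linarith : a ≤ a + d)).comp_add_left a
    simpa using this
  have hintE : IntegrableOn (fun t : ℝ => Real.exp (-t)) (Set.Ioi 0) := by
    have := exp_neg_integrableOn_Ioi (0:ℝ) (one_pos)
    simpa using this
  have hintG := integ_Ioi hν
  have hintS : IntegrableOn (fun t : ℝ => (a ^ ν + t ^ ν) * Real.exp (-t)) (Set.Ioi 0) := by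
    have : (fun t : ℝ => (a ^ ν + t ^ ν) * Real.exp (-t))
        = fun t : ℝ => a ^ ν * Real.exp (-t) + t ^ ν * Real.exp (-t) := by
      funext t; ring
    rw [this]
    exact (hintE.const_mul _).add hintG
  have hint2 : IntervalIntegrable (fun t : ℝ => 2 ^ ν * Real.exp (-a) *
      ((a ^ ν + t ^ ν) * Real.exp (-t))) volume 0 d := by
    apply IntervalIntegrable.const_mul
    rw [intervalIntegrable_iff, Set.uIoc_of_le hd]
    exact hintS.mono_set Set.Ioc_subset_Ioi_self
  have hmono : (∫ t in (0:ℝ)..d, (a + t) ^ ν * Real.exp (-(a + t)))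
      ≤ ∫ t in (0:ℝ)..d, 2 ^ ν * Real.exp (-a) * ((a ^ ν + t ^ ν) * Real.exp (-t)) := by
    apply intervalIntegral.integral_mono_on hd hint1 hint2
    intro t ht
    have ht0 : 0 ≤ t := ht.1
    have := two_rpow_split hν ha ht0
    have hexp : Real.exp (-(a + t)) = Real.exp (-a) * Real.exp (-t) := by
      rw [← Real.exp_add]; ring_nf
    rw [hexp]
    have h1 : (a + t) ^ ν * (Real.exp (-a) * Real.exp (-t))
        ≤ 2 ^ ν * (a ^ ν + t ^ ν) * (Real.exp (-a) * Real.exp (-t)) :=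
      mul_le_mul_of_nonneg_right this (by positivity)
    calc (a + t) ^ ν * (Real.exp (-a) * Real.exp (-t))
        ≤ 2 ^ ν * (a ^ ν + t ^ ν) * (Real.exp (-a) * Real.exp (-t)) := h1
      _ = 2 ^ ν * Real.exp (-a) * ((a ^ ν + t ^ ν) * Real.exp (-t)) := by ring
  have hconst : (∫ t in (0:ℝ)..d, 2 ^ ν * Real.exp (-a) * ((a ^ ν + t ^ ν) * Real.exp (-t)))
      = 2 ^ ν * Real.exp (-a) * ∫ t in (0:ℝ)..d, (a ^ ν + t ^ ν) * Real.exp (-t) :=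
    intervalIntegral.integral_const_mul _ _
  have hIoi : (∫ t in Set.Ioi (0:ℝ), (a ^ ν + t ^ ν) * Real.exp (-t))
      = a ^ ν + Real.Gamma (ν + 1) := by
    have : (fun t : ℝ => (a ^ ν + t ^ ν) * Real.exp (-t))
        = fun t : ℝ => a ^ ν * Real.exp (-t) + t ^ ν * Real.exp (-t) := by
      funext t; ring
    rw [this, MeasureTheory.integral_add ((hintE.const_mul _)) hintG,
      integral_const_mul, integral_exp_neg_Ioi_zero,
      Real.Gamma_eq_integral (by linarith : (0:ℝ) < ν + 1)]
    simp [mul_comm]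
  have hset : (∫ t in (0:ℝ)..d, (a ^ ν + t ^ ν) * Real.exp (-t))
      ≤ ∫ t in Set.Ioi (0:ℝ), (a ^ ν + t ^ ν) * Real.exp (-t) := by
    rw [intervalIntegral.integral_of_le hd]
    apply MeasureTheory.setIntegral_mono_set hintS
    · filter_upwards [self_mem_ae_restrict measurableSet_Ioi] with t ht
      have ht0 : 0 < t := ht
      positivity
    · exact Set.Ioc_subset_Ioi_self.eventuallyLE
  calc (∫ t in (0:ℝ)..d, (a + t) ^ ν * Real.exp (-(a + t)))
      ≤ 2 ^ ν * Real.exp (-a) * ∫ t in (0:ℝ)..d, (a ^ ν + t ^ ν) * Real.exp (-t) := by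
        rw [← hconst]; exact hmono
    _ ≤ 2 ^ ν * Real.exp (-a) * (a ^ ν + Real.Gamma (ν + 1)) := by
        apply mul_le_mul_of_nonneg_left _ (by positivity)
        rw [← hIoi]; exact hset
    _ = Real.exp (-a) * (2 ^ ν * (a ^ ν + Real.Gamma (ν + 1))) := by ring

set_option maxHeartbeats 1200000 in
theorem stmt_1 (ν : ℝ) (hν : 0 ≤ ν) :
    ∃ c : ℝ, 1 ≤ c ∧ ∀ a b : ℝ, 0 ≤ a → a < b → 1 ≤ b →
      c⁻¹ * (Real.exp (-a) * (a ^ ν + 1) * min (b - a) 1)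
        ≤ (∫ u in a..b, u ^ ν * Real.exp (-u)) ∧
      (∫ u in a..b, u ^ ν * Real.exp (-u))
        ≤ c * (Real.exp (-a) * (a ^ ν + 1) * min (b - a) 1) := by
  have h2ν : (1:ℝ) ≤ 2 ^ ν := Real.one_le_rpow one_le_two hν
  have h2ν0 : (0:ℝ) < 2 ^ ν := by positivity
  have hΓ : 0 < Real.Gamma (ν + 1) := Real.Gamma_pos_of_pos (by linarith)
  have he : (1:ℝ) ≤ Real.exp 1 := by
    have := Real.add_one_le_exp (1:ℝ); linarith
  set c : ℝ := 2 ^ ν * (1 + Real.Gamma (ν + 1)) + 4 * Real.exp 1 * (1 + 2 ^ ν) with hc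
  clear_value c
  have hc1 : 1 ≤ c := by rw [hc]; nlinarith [mul_pos h2ν0 hΓ]
  have hc0 : 0 < c := by linarith
  refine ⟨c, hc1, fun a b ha hab hb => ?_⟩
  set m : ℝ := min (b - a) 1 with hm
  have hm0 : 0 < m := lt_min (by linarith) one_pos
  have hm1 : m ≤ 1 := min_le_right _ _
  have hmba : m ≤ b - a := min_le_left _ _
  have haν : 0 ≤ a ^ ν := Real.rpow_nonneg ha ν
  have hexpa : 0 < Real.exp (-a) := Real.exp_pos _
  constructor
  · -- lower bound
    set s : ℝ := max a (1/2) with hs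
    have has : a ≤ s := le_max_left _ _
    have hhs : (1:ℝ)/2 ≤ s := le_max_right _ _
    have hs0 : 0 ≤ s := by linarith
    have hsa : s ≤ a + 1/2 := max_le (by linarith) (by linarith)
    have hsb : s + m / 2 ≤ b := by
      rcases le_total a (1/2) with h | h
      · rw [hs, max_eq_right h]; linarith
      · rw [hs, max_eq_left h]; linarith
    -- pointwise lower bound on [s, s + m/2]
    have hsν : (a ^ ν + 1) ≤ 2 * (1 + 2 ^ ν) * s ^ ν := by
      have h1 : a ^ ν ≤ s ^ ν := Real.rpow_le_rpow ha has hν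
      have h2 : (1/2 : ℝ) ^ ν ≤ s ^ ν := Real.rpow_le_rpow (by norm_num) hhs hν
      have h3 : (1/2 : ℝ) ^ ν = (2 ^ ν)⁻¹ := by
        rw [one_div, Real.inv_rpow (by norm_num)]
      have h4 : 1 ≤ 2 ^ ν * s ^ ν := by
        rw [h3] at h2
        calc (1:ℝ) = 2 ^ ν * (2 ^ ν)⁻¹ := by field_simp
          _ ≤ 2 ^ ν * s ^ ν := mul_le_mul_of_nonneg_left h2 (le_of_lt h2ν0)
      nlinarith [Real.rpow_nonneg hs0 ν]
    have hLB : ∀ u ∈ Set.Icc s (s + m / 2),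
        Real.exp (-(a+1)) * ((a ^ ν + 1) / (2 * (1 + 2 ^ ν)))
          ≤ u ^ ν * Real.exp (-u) := by
      intro u hu
      have hu1 : s ≤ u := hu.1
      have hu2 : u ≤ a + 1 := by
        have := hu.2; linarith
      have hupow : s ^ ν ≤ u ^ ν := Real.rpow_le_rpow hs0 hu1 hν
      have hue : Real.exp (-(a+1)) ≤ Real.exp (-u) := Real.exp_le_exp.mpr (by linarith)
      have hnum : (a ^ ν + 1) / (2 * (1 + 2 ^ ν)) ≤ s ^ ν := by
        rw [div_le_iff₀ (by positivity)]
        nlinarith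
      calc Real.exp (-(a+1)) * ((a ^ ν + 1) / (2 * (1 + 2 ^ ν)))
          ≤ Real.exp (-(a+1)) * u ^ ν := by
            apply mul_le_mul_of_nonneg_left _ (le_of_lt (Real.exp_pos _))
            exact le_trans hnum hupow
        _ = u ^ ν * Real.exp (-(a+1)) := by ring
        _ ≤ u ^ ν * Real.exp (-u) :=
            mul_le_mul_of_nonneg_left hue (Real.rpow_nonneg (hs0.trans hu1) ν)
    have hint_s : IntervalIntegrable (fun u : ℝ => u ^ ν * Real.exp (-u))
        volume s (s + m / 2) := ii_f hν hs0 (by linarith)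
    have hstep1 : (m / 2) * (Real.exp (-(a+1)) * ((a ^ ν + 1) / (2 * (1 + 2 ^ ν))))
        ≤ ∫ u in s..(s + m / 2), u ^ ν * Real.exp (-u) := by
      have h' := intervalIntegral.integral_mono_on (by linarith : s ≤ s + m / 2)
        (intervalIntegrable_const) hint_s hLB
      rw [intervalIntegral.integral_const, smul_eq_mul] at h'
      have h2 : s + m / 2 - s = m / 2 := by ring
      rwa [h2] at h'
    have hstep2 : (∫ u in s..(s + m / 2), u ^ ν * Real.exp (-u))
        ≤ ∫ u in a..b, u ^ ν * Real.exp (-u) := by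
      apply intervalIntegral.integral_mono_interval has (by linarith) hsb
      · filter_upwards [self_mem_ae_restrict measurableSet_Ioc] with u hu
        have : 0 < u := lt_of_le_of_lt ha hu.1
        positivity
      · exact ii_f hν ha (le_of_lt hab)
    have hfinal : c⁻¹ * (Real.exp (-a) * (a ^ ν + 1) * m)
        ≤ (m / 2) * (Real.exp (-(a+1)) * ((a ^ ν + 1) / (2 * (1 + 2 ^ ν)))) := by
      have hEq : (m / 2) * (Real.exp (-(a+1)) * ((a ^ ν + 1) / (2 * (1 + 2 ^ ν))))
          = (4 * Real.exp 1 * (1 + 2 ^ ν))⁻¹ * (Real.exp (-a) * (a ^ ν + 1) * m) := by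
        have : Real.exp (-(a+1)) = Real.exp (-a) * (Real.exp 1)⁻¹ := by
          rw [← Real.exp_neg, ← Real.exp_add]; ring_nf
        rw [this]
        have he0 : Real.exp 1 ≠ 0 := ne_of_gt (Real.exp_pos _)
        field_simp
        ring
      rw [hEq]
      apply mul_le_mul_of_nonneg_right _ (by positivity)
      apply inv_anti₀ (by positivity)
      rw [hc]
      nlinarith [mul_pos h2ν0 (by linarith : (0:ℝ) < 1 + Real.Gamma (ν + 1))]
    linarith
  · -- upper bound
    rcases le_or_gt (b - a) 1 with hba | hba
    · -- short interval
      have hmeq : m = b - a := min_eq_left hba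
      have hUB : ∀ u ∈ Set.Icc a b,
          u ^ ν * Real.exp (-u) ≤ 2 ^ ν * (a ^ ν + 1) * Real.exp (-a) := by
        intro u hu
        have hu0 : 0 ≤ u := le_trans ha hu.1
        have hupow : u ^ ν ≤ (a + 1) ^ ν :=
          Real.rpow_le_rpow hu0 (by have := hu.2; linarith) hν
        have hsplit : (a + 1) ^ ν ≤ 2 ^ ν * (a ^ ν + 1) := by
          have := two_rpow_split hν ha (le_refl 0 |>.trans zero_le_one)
          simpa [Real.one_rpow] using this
        have hue : Real.exp (-u) ≤ Real.exp (-a) :=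
          Real.exp_le_exp.mpr (by have := hu.1; linarith)
        calc u ^ ν * Real.exp (-u) ≤ (a + 1) ^ ν * Real.exp (-a) := by
              apply mul_le_mul hupow hue (le_of_lt (Real.exp_pos _))
              positivity
          _ ≤ 2 ^ ν * (a ^ ν + 1) * Real.exp (-a) :=
              mul_le_mul_of_nonneg_right hsplit (le_of_lt hexpa)
      have hstep : (∫ u in a..b, u ^ ν * Real.exp (-u))
          ≤ (b - a) * (2 ^ ν * (a ^ ν + 1) * Real.exp (-a)) := by
        have h' := intervalIntegral.integral_mono_on (le_of_lt hab)
          (ii_f hν ha (le_of_lt hab)) (intervalIntegrable_const) hUB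
        rwa [intervalIntegral.integral_const, smul_eq_mul] at h'
      calc (∫ u in a..b, u ^ ν * Real.exp (-u))
          ≤ (b - a) * (2 ^ ν * (a ^ ν + 1) * Real.exp (-a)) := hstep
        _ ≤ c * (Real.exp (-a) * (a ^ ν + 1) * m) := by
            rw [hmeq]
            have h1 : 2 ^ ν ≤ c := by
              rw [hc]
              nlinarith [mul_pos h2ν0 hΓ]
            have h2 : (0:ℝ) ≤ (b - a) * ((a ^ ν + 1) * Real.exp (-a)) := by
              have : (0:ℝ) ≤ b - a := by linarith
              positivity
            calc (b - a) * (2 ^ ν * (a ^ ν + 1) * Real.exp (-a))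
                = 2 ^ ν * ((b - a) * ((a ^ ν + 1) * Real.exp (-a))) := by ring
              _ ≤ c * ((b - a) * ((a ^ ν + 1) * Real.exp (-a))) :=
                  mul_le_mul_of_nonneg_right h1 h2
              _ = c * (Real.exp (-a) * (a ^ ν + 1) * (b - a)) := by ring
    · -- long interval
      have hmeq : m = 1 := min_eq_right (by linarith)
      have hsub : (∫ u in a..b, u ^ ν * Real.exp (-u))
          = ∫ t in (0:ℝ)..(b - a), (a + t) ^ ν * Real.exp (-(a + t)) := by
        rw [intervalIntegral.integral_comp_add_left (fun u => u ^ ν * Real.exp (-u)) a]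
        norm_num
      have htail := tail_bound hν ha (by linarith : (0:ℝ) ≤ b - a)
      calc (∫ u in a..b, u ^ ν * Real.exp (-u))
          ≤ Real.exp (-a) * (2 ^ ν * (a ^ ν + Real.Gamma (ν + 1))) := by
            rw [hsub]; exact htail
        _ ≤ c * (Real.exp (-a) * (a ^ ν + 1) * m) := by
            rw [hmeq]
            have h1 : 2 ^ ν * (a ^ ν + Real.Gamma (ν + 1)) ≤ c * (a ^ ν + 1) := by
              rw [hc]
              have h2 : 0 ≤ 2 ^ ν * (1 + a ^ ν * Real.Gamma (ν + 1)) :=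
                mul_nonneg (le_of_lt h2ν0)
                  (add_nonneg zero_le_one (mul_nonneg haν (le_of_lt hΓ)))
              have h3 : 0 ≤ 4 * Real.exp 1 * (1 + 2 ^ ν) * (a ^ ν + 1) :=
                mul_nonneg (mul_nonneg (mul_nonneg (by norm_num)
                  (Real.exp_pos 1).le) (by linarith)) (by linarith)
              calc 2 ^ ν * (a ^ ν + Real.Gamma (ν + 1))
                  ≤ 2 ^ ν * (a ^ ν + Real.Gamma (ν + 1))
                    + (2 ^ ν * (1 + a ^ ν * Real.Gamma (ν + 1))
                      + 4 * Real.exp 1 * (1 + 2 ^ ν) * (a ^ ν + 1)) := by linarith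
                _ = (2 ^ ν * (1 + Real.Gamma (ν + 1)) + 4 * Real.exp 1 * (1 + 2 ^ ν))
                    * (a ^ ν + 1) := by ring
            calc Real.exp (-a) * (2 ^ ν * (a ^ ν + Real.Gamma (ν + 1)))
                ≤ Real.exp (-a) * (c * (a ^ ν + 1)) :=
                  mul_le_mul_of_nonneg_left h1 (le_of_lt hexpa)
              _ = c * (Real.exp (-a) * (a ^ ν + 1) * 1) := by ring
end

section
/- There exists an absolute constant c ≥ 1 such that for every a with 0 < a ≤ 1 and every v > 0, c⁻¹ · R ≤ ∫_0^a e^{−v·u} · u/((log u)² + 1) du ≤ c · R, where R = 1/((v + 1/a)² · ((log(v + 1/a))² + 1)). -/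
/-!
Write `b = v + 1/a ≥ 1` and `L(x) = (log x)² + 1`. The weight `1/L` varies slowly: for
every `u > 0`, `L(b) ≤ 17 e^{bu/2} L(u)` (for `bu ≤ 1` because `|log u| ≥ log b`, for `bu > 1`
because `log b = log (bu) - log u` and `(log s)² ≲ e^{s/2}`). Since `u ≤ a` also gives
`e^{-vu} ≤ e · e^{-bu}`, the integrand is at most `17e/L(b) · u e^{-bu/2}`, whose integral is
at most `68e/(b² L(b))`. Conversely, on `[1/(2b), 1/b]` we have `e^{-vu} ≥ e^{-1}`,
`u ≥ 1/(2b)` and `L(u) ≤ 2 L(b)`, which gives the lower bound `1/(8e b² L(b))`.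
-/

open MeasureTheory Real Set

lemma sq_log_le_sq_log_of_le_inv {b u : ℝ} (hb : 1 ≤ b) (hu : 0 < u) (hub : u ≤ b⁻¹) :
    log b ^ 2 ≤ log u ^ 2 := by
  have hlog : log u ≤ -log b := by
    simpa only [log_inv] using log_le_log hu hub
  nlinarith [log_nonneg hb]

lemma sq_log_le_eight_mul_exp {s : ℝ} (hs : 1 ≤ s) : log s ^ 2 ≤ 8 * exp (s / 2) := by
  have hsqrt : log s ≤ 2 * s ^ (1 / 2 : ℝ) := by
    simpa [div_eq_mul_inv, mul_comm] using
      log_le_rpow_div (by linarith : 0 ≤ s) (by norm_num : (0 : ℝ) < 1 / 2)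
  have hsq : (s ^ (1 / 2 : ℝ)) ^ 2 = s := by
    rw [← rpow_natCast, ← rpow_mul (by linarith)]; norm_num
  have hexp : s / 2 + 1 ≤ exp (s / 2) := add_one_le_exp _
  nlinarith [log_nonneg hs]

lemma sq_log_add_one_le_mul_exp_mul {b u : ℝ} (hb : 1 ≤ b) (hu : 0 < u) :
    log b ^ 2 + 1 ≤ 17 * exp (b * u / 2) * (log u ^ 2 + 1) := by
  have hexp : 1 ≤ exp (b * u / 2) := one_le_exp (by positivity)
  rcases le_or_gt (b * u) 1 with hbu | hbu
  · have := sq_log_le_sq_log_of_le_inv hb hu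
      (by rw [le_inv_comm₀ hu (by positivity), inv_eq_one_div, le_div_iff₀ hu]; linarith)
    nlinarith [sq_nonneg (log u)]
  · have hsplit : log b = log (b * u) - log u := by
      rw [log_mul (by positivity) hu.ne']; ring
    have hb2 : log b ^ 2 ≤ 2 * log (b * u) ^ 2 + 2 * log u ^ 2 := by
      rw [hsplit]; nlinarith [sq_nonneg (log (b * u) + log u)]
    nlinarith [sq_log_le_eight_mul_exp hbu.le, mul_le_mul_of_nonneg_right hexp (sq_nonneg (log u))]

lemma sq_log_add_one_le_two_mul {b u : ℝ} (hb : 1 ≤ b) (hu : (2 * b)⁻¹ ≤ u) (hub : u ≤ b⁻¹) :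
    log u ^ 2 + 1 ≤ 2 * (log b ^ 2 + 1) := by
  have hu0 : 0 < u := lt_of_lt_of_le (by positivity) hu
  have hupper : log u ≤ -log b := by
    simpa only [log_inv] using log_le_log hu0 hub
  have hlower : -(log 2 + log b) ≤ log u := by
    simpa only [log_inv, log_mul two_ne_zero (by positivity : b ≠ 0)] using
      log_le_log (by positivity) hu
  have hlog2 : log 2 ^ 2 ≤ 1 / 2 := by nlinarith [log_two_lt_d9, Real.log_pos one_lt_two]
  have hsq : log u ^ 2 ≤ (log 2 + log b) ^ 2 := by
    nlinarith [log_nonneg hb, Real.log_pos one_lt_two]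
  nlinarith [sq_nonneg (log 2 - log b)]

lemma one_le_add_one_div {a v : ℝ} (ha : 0 < a) (ha1 : a ≤ 1) (hv : 0 ≤ v) : 1 ≤ v + 1 / a := by
  have : 1 ≤ 1 / a := by rw [le_div_iff₀ ha]; linarith
  linarith

lemma integrand_le_of_mem_Ioc {a v u : ℝ} (ha : 0 < a) (ha1 : a ≤ 1) (hv : 0 ≤ v)
    (hu : u ∈ Ioc 0 a) :
    exp (-(v * u)) * u / (log u ^ 2 + 1) ≤
      17 * exp 1 / (log (v + 1 / a) ^ 2 + 1) * (u * exp (-((v + 1 / a) / 2 * u))) := by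
  obtain ⟨hu0, hua⟩ := hu
  set b := v + 1 / a
  have hb : 1 ≤ b := one_le_add_one_div ha ha1 hv
  have hweight : 1 / (log u ^ 2 + 1) ≤ 17 * exp (b * u / 2) / (log b ^ 2 + 1) := by
    rw [div_le_div_iff₀ (by positivity) (by positivity)]
    linarith [sq_log_add_one_le_mul_exp_mul hb hu0]
  have hexp : exp (-(v * u)) * exp (b * u / 2) ≤ exp 1 * exp (-(b / 2 * u)) := by
    have : u / a ≤ 1 := (div_le_one ha).2 hua
    rw [← exp_add, ← exp_add, exp_le_exp]
    linarith [show b * u = v * u + u / a by ring]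
  calc exp (-(v * u)) * u / (log u ^ 2 + 1)
      = exp (-(v * u)) * u * (1 / (log u ^ 2 + 1)) := by ring
    _ ≤ exp (-(v * u)) * u * (17 * exp (b * u / 2) / (log b ^ 2 + 1)) := by gcongr
    _ = 17 / (log b ^ 2 + 1) * u * (exp (-(v * u)) * exp (b * u / 2)) := by ring
    _ ≤ 17 / (log b ^ 2 + 1) * u * (exp 1 * exp (-(b / 2 * u))) := by gcongr
    _ = 17 * exp 1 / (log b ^ 2 + 1) * (u * exp (-(b / 2 * u))) := by ring

lemma inv_le_integrand {v b u : ℝ} (hb : 1 ≤ b) (hvb : v ≤ b) (hu : u ∈ Ioc (2 * b)⁻¹ b⁻¹) :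
    (4 * exp 1 * b * (log b ^ 2 + 1))⁻¹ ≤ exp (-(v * u)) * u / (log u ^ 2 + 1) := by
  obtain ⟨hlo, hhi⟩ := hu
  have hu0 : 0 < u := lt_trans (by positivity) hlo
  have hexp : exp (-1) ≤ exp (-(v * u)) := by
    have : b * u ≤ 1 := calc
      b * u ≤ b * b⁻¹ := by gcongr
      _ = 1 := mul_inv_cancel₀ (by positivity)
    gcongr; nlinarith
  calc (4 * exp 1 * b * (log b ^ 2 + 1))⁻¹ = exp (-1) * (2 * b)⁻¹ / (2 * (log b ^ 2 + 1)) := by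
        rw [exp_neg]; field_simp; ring
    _ ≤ exp (-(v * u)) * u / (log u ^ 2 + 1) := by
        gcongr
        exact sq_log_add_one_le_two_mul hb hlo.le hhi

lemma integrableOn_integrand {a v : ℝ} (ha : 0 < a) (ha1 : a ≤ 1) (hv : 0 ≤ v) :
    IntegrableOn (fun u ↦ exp (-(v * u)) * u / (log u ^ 2 + 1)) (Ioc 0 a) := by
  refine Integrable.mono'
    (g := fun u ↦ 17 * exp 1 / (log (v + 1 / a) ^ 2 + 1) * (u * exp (-((v + 1 / a) / 2 * u))))
    (by fun_prop : Continuous _).integrableOn_Ioc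
    (by fun_prop : Measurable _).aestronglyMeasurable ?_
  filter_upwards [ae_restrict_mem measurableSet_Ioc] with u hu
  rw [norm_of_nonneg (by have := hu.1; positivity)]
  exact integrand_le_of_mem_Ioc ha ha1 hv hu

lemma integral_integrand_le {a v : ℝ} (ha : 0 < a) (ha1 : a ≤ 1) (hv : 0 ≤ v) :
    ∫ u in Ioc 0 a, exp (-(v * u)) * u / (log u ^ 2 + 1)
      ≤ 68 * exp 1 * (1 / ((v + 1 / a) ^ 2 * (log (v + 1 / a) ^ 2 + 1))) := by
  have hb : 0 < v + 1 / a := by linarith [one_le_add_one_div ha ha1 hv]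
  calc ∫ u in Ioc 0 a, exp (-(v * u)) * u / (log u ^ 2 + 1)
      ≤ ∫ u in Ioc 0 a, 17 * exp 1 / (log (v + 1 / a) ^ 2 + 1) *
          (u * exp (-((v + 1 / a) / 2 * u))) :=
        setIntegral_mono_on (integrableOn_integrand ha ha1 hv)
          (by fun_prop : Continuous _).integrableOn_Ioc measurableSet_Ioc
          fun u hu ↦ integrand_le_of_mem_Ioc ha ha1 hv hu
    _ = 17 * exp 1 / (log (v + 1 / a) ^ 2 + 1) *
          ∫ u in (0 : ℝ)..a, u ^ 1 * exp (-((v + 1 / a) / 2 * u)) := by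
        rw [integral_const_mul, intervalIntegral.integral_of_le ha.le]; simp
    _ ≤ 17 * exp 1 / (log (v + 1 / a) ^ 2 + 1) * (1 / ((v + 1 / a) / 2) ^ 2) := by
        gcongr; simpa using intervalIntegral_pow_mul_exp_neg_le (k := 1) ha.le (by positivity)
    _ = 68 * exp 1 * (1 / ((v + 1 / a) ^ 2 * (log (v + 1 / a) ^ 2 + 1))) := by
        field_simp; ring

lemma le_integral_integrand {a v : ℝ} (ha : 0 < a) (ha1 : a ≤ 1) (hv : 0 ≤ v) :
    (8 * exp 1)⁻¹ * (1 / ((v + 1 / a) ^ 2 * (log (v + 1 / a) ^ 2 + 1)))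
      ≤ ∫ u in Ioc 0 a, exp (-(v * u)) * u / (log u ^ 2 + 1) := by
  set b := v + 1 / a
  have hb : 1 ≤ b := one_le_add_one_div ha ha1 hv
  have hsub : Ioc (2 * b)⁻¹ b⁻¹ ⊆ Ioc 0 a := by
    refine Ioc_subset_Ioc (by positivity) ?_
    rw [inv_le_comm₀ (by positivity) ha]
    linarith [one_div a]
  calc (8 * exp 1)⁻¹ * (1 / (b ^ 2 * (log b ^ 2 + 1)))
      = ∫ _ in Ioc (2 * b)⁻¹ b⁻¹, (4 * exp 1 * b * (log b ^ 2 + 1))⁻¹ := by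
        rw [setIntegral_const, Real.volume_real_Ioc_of_le (by gcongr; linarith), smul_eq_mul]
        field_simp; ring
    _ ≤ ∫ u in Ioc (2 * b)⁻¹ b⁻¹, exp (-(v * u)) * u / (log u ^ 2 + 1) :=
        setIntegral_mono_on (integrableOn_const measure_Ioc_lt_top.ne)
          ((integrableOn_integrand ha ha1 hv).mono_set hsub) measurableSet_Ioc
          fun u hu ↦ inv_le_integrand hb (le_add_of_nonneg_right (by positivity)) hu
    _ ≤ ∫ u in Ioc 0 a, exp (-(v * u)) * u / (log u ^ 2 + 1) := by
        refine setIntegral_mono_set (integrableOn_integrand ha ha1 hv) ?_ hsub.eventuallyLE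
        filter_upwards [ae_restrict_mem measurableSet_Ioc] with u hu
        have := hu.1
        positivity

theorem stmt_3 :
    ∃ c : ℝ, 1 ≤ c ∧ ∀ a v : ℝ, 0 < a → a ≤ 1 → 0 < v →
      c⁻¹ * (1 / ((v + 1/a) ^ 2 * ((Real.log (v + 1/a)) ^ 2 + 1)))
        ≤ (∫ u in Set.Ioc (0:ℝ) a, Real.exp (-(v * u)) * u / ((Real.log u) ^ 2 + 1)) ∧
      (∫ u in Set.Ioc (0:ℝ) a, Real.exp (-(v * u)) * u / ((Real.log u) ^ 2 + 1))
        ≤ c * (1 / ((v + 1/a) ^ 2 * ((Real.log (v + 1/a)) ^ 2 + 1))) := by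
  have he : 1 ≤ exp 1 := one_le_exp zero_le_one
  refine ⟨68 * exp 1, by linarith, fun a v ha ha1 hv ↦
    ⟨le_trans ?_ (le_integral_integrand ha ha1 hv.le), integral_integrand_le ha ha1 hv.le⟩⟩
  gcongr
  linarith
end

section
/- There exists an absolute constant c ≥ 1 such that for every a with 0 < a ≤ 1 and every v > 0 with a·v ≤ 2, c⁻¹ · a²/((log a)² + 1) ≤ ∫_0^a e^{−v·u} · u/((log u)² + 1) du ≤ c · a²/((log a)² + 1). -/
/-!
For `0 < u ≤ a ≤ 1` we have `(log u)² ≥ (log a)²` and `e^{-vu} ≤ 1`, so the integrand is at most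
`u / ((log a)² + 1)`, whose integral is `a² / (2((log a)² + 1))`. For the lower bound only the
right half `(a/2, a]` is used: there `e^{-vu} ≥ e^{-av} ≥ e^{-2}`, `u ≥ a/2` and
`(log u)² + 1 ≤ 2((log a)² + 1)`, so every factor of the integrand is comparable to its value at `a`.
-/

open MeasureTheory Real Set

noncomputable def logDampedKernel (v u : ℝ) : ℝ :=
  exp (-(v * u)) * u / (log u ^ 2 + 1)

lemma log_sq_le_log_sq_of_le {u a : ℝ} (hu : 0 < u) (hua : u ≤ a) (ha : a ≤ 1) :
    log a ^ 2 ≤ log u ^ 2 := by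
  have hlog : log u ≤ log a := log_le_log hu hua
  have ha0 : log a ≤ 0 := log_nonpos (hu.le.trans hua) ha
  nlinarith

/-- On `[a/2, a]` the logarithm moves by at most `log 2`, and `2 (log 2)² < 1`. -/
lemma log_sq_add_one_le_two_mul {u a : ℝ} (ha : 0 < a) (hu : a / 2 ≤ u) (hua : u ≤ a) :
    log u ^ 2 + 1 ≤ 2 * (log a ^ 2 + 1) := by
  have hu0 : 0 < u := by linarith
  have hupper : log u ≤ log a := log_le_log hu0 hua
  have hlower : log a - log 2 ≤ log u := by
    rw [← log_div ha.ne' two_ne_zero]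
    exact log_le_log (by positivity) hu
  have hlog2 : log 2 < 0.7 := log_two_lt_d9.trans (by norm_num)
  have hd : (log u - log a) ^ 2 ≤ 1 / 2 := by
    nlinarith [log_nonneg one_le_two]
  nlinarith [sq_nonneg (log u - 2 * log a)]

lemma logDampedKernel_nonneg {u : ℝ} (v : ℝ) (hu : 0 ≤ u) : 0 ≤ logDampedKernel v u := by
  unfold logDampedKernel
  positivity

lemma norm_logDampedKernel_le (v u : ℝ) : ‖logDampedKernel v u‖ ≤ ‖exp (-(v * u)) * u‖ := by
  simp only [Real.norm_eq_abs]
  rw [logDampedKernel, abs_div, abs_of_pos (by positivity : (0:ℝ) < log u ^ 2 + 1)]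
  exact div_le_self (abs_nonneg _) (le_add_of_nonneg_left (sq_nonneg _))

lemma integrableOn_logDampedKernel (v a b : ℝ) :
    IntegrableOn (logDampedKernel v) (Ioc a b) := by
  have hmeas : Measurable (logDampedKernel v) := by
    unfold logDampedKernel
    fun_prop
  exact Integrable.mono
    (Continuous.integrableOn_Ioc (by fun_prop : Continuous fun u => exp (-(v * u)) * u))
    hmeas.aestronglyMeasurable.restrict
    (Filter.Eventually.of_forall (norm_logDampedKernel_le v))

lemma logDampedKernel_le {v u a : ℝ} (hv : 0 ≤ v) (hu : 0 < u) (hua : u ≤ a) (ha : a ≤ 1) :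
    logDampedKernel v u ≤ u / (log a ^ 2 + 1) := by
  have hexp : exp (-(v * u)) ≤ 1 := exp_le_one_iff.2 (by nlinarith)
  refine div_le_div₀ hu.le (by nlinarith) (by positivity) ?_
  linarith [log_sq_le_log_sq_of_le hu hua ha]

lemma le_logDampedKernel {v u a M : ℝ} (hv : 0 ≤ v) (ha : 0 < a) (hu : a / 2 ≤ u) (hua : u ≤ a)
    (havM : a * v ≤ M) :
    exp (-M) * (a / 2) / (2 * (log a ^ 2 + 1)) ≤ logDampedKernel v u := by
  have hexp : exp (-M) ≤ exp (-(v * u)) := exp_le_exp.2 (by nlinarith)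
  exact div_le_div₀ (mul_nonneg (exp_pos _).le (by linarith))
    (mul_le_mul hexp hu (by positivity) (exp_pos _).le) (by positivity)
    (log_sq_add_one_le_two_mul ha hu hua)

lemma setIntegral_logDampedKernel_le {v a : ℝ} (hv : 0 ≤ v) (ha : 0 ≤ a) (ha1 : a ≤ 1) :
    ∫ u in Ioc 0 a, logDampedKernel v u ≤ a ^ 2 / 2 / (log a ^ 2 + 1) := by
  calc ∫ u in Ioc 0 a, logDampedKernel v u
      ≤ ∫ u in Ioc 0 a, u / (log a ^ 2 + 1) :=
        setIntegral_mono_on (integrableOn_logDampedKernel v 0 a)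
          (continuous_id.div_const _).integrableOn_Ioc measurableSet_Ioc
          fun u hu => logDampedKernel_le hv hu.1 hu.2 ha1
    _ = a ^ 2 / 2 / (log a ^ 2 + 1) := by
        rw [integral_div, ← intervalIntegral.integral_of_le ha, integral_id]
        norm_num

lemma le_setIntegral_logDampedKernel {v a M : ℝ} (hv : 0 ≤ v) (ha : 0 < a) (havM : a * v ≤ M) :
    exp (-M) / 8 * (a ^ 2 / (log a ^ 2 + 1)) ≤ ∫ u in Ioc 0 a, logDampedKernel v u := by
  have hhalf : volume.real (Ioc (a / 2) a) = a / 2 := by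
    rw [measureReal_def, volume_Ioc, ENNReal.toReal_ofReal (by linarith)]
    ring
  calc exp (-M) / 8 * (a ^ 2 / (log a ^ 2 + 1))
      = exp (-M) * (a / 2) / (2 * (log a ^ 2 + 1)) * volume.real (Ioc (a / 2) a) := by
        rw [hhalf]
        field_simp
        ring
    _ ≤ ∫ u in Ioc (a / 2) a, logDampedKernel v u :=
        setIntegral_ge_of_const_le_real measurableSet_Ioc measure_Ioc_lt_top.ne
          (fun u hu => le_logDampedKernel hv ha hu.1.le hu.2 havM)
          (integrableOn_logDampedKernel v _ _)
    _ ≤ ∫ u in Ioc 0 a, logDampedKernel v u :=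
        setIntegral_mono_set (integrableOn_logDampedKernel v 0 a)
          (ae_restrict_of_forall_mem measurableSet_Ioc fun u hu =>
            logDampedKernel_nonneg v hu.1.le)
          (Ioc_subset_Ioc_left (by linarith)).eventuallyLE

theorem stmt_4 :
    ∃ c : ℝ, 1 ≤ c ∧ ∀ a v : ℝ, 0 < a → a ≤ 1 → 0 < v → a * v ≤ 2 →
      c⁻¹ * (a ^ 2 / ((Real.log a) ^ 2 + 1))
        ≤ (∫ u in Set.Ioc (0:ℝ) a, Real.exp (-(v * u)) * u / ((Real.log u) ^ 2 + 1)) ∧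
      (∫ u in Set.Ioc (0:ℝ) a, Real.exp (-(v * u)) * u / ((Real.log u) ^ 2 + 1))
        ≤ c * (a ^ 2 / ((Real.log a) ^ 2 + 1)) := by
  have he : 1 ≤ exp 2 := one_le_exp zero_le_two
  refine ⟨8 * exp 2, by linarith, fun a v ha ha1 hv hav => ⟨?_, ?_⟩⟩
  · calc (8 * exp 2)⁻¹ * (a ^ 2 / (log a ^ 2 + 1))
        = exp (-2) / 8 * (a ^ 2 / (log a ^ 2 + 1)) := by rw [exp_neg]; ring
      _ ≤ _ := le_setIntegral_logDampedKernel hv.le ha hav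
  · calc ∫ u in Ioc 0 a, logDampedKernel v u
        ≤ a ^ 2 / 2 / (log a ^ 2 + 1) := setIntegral_logDampedKernel_le hv.le ha.le ha1
      _ = 1 / 2 * (a ^ 2 / (log a ^ 2 + 1)) := by ring
      _ ≤ 8 * exp 2 * (a ^ 2 / (log a ^ 2 + 1)) := by gcongr; linarith
end

section
/- There exists an absolute constant c ≥ 1 such that for every a with 0 < a ≤ 1 and every v > 0 with a·v ≥ 2, c⁻¹ · 1/(v² · ((log v)² + 1)) ≤ ∫_0^a e^{−v·u} · u/((log u)² + 1) du ≤ c · 1/(v² · ((log v)² + 1)). -/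
/-! Write `L x = (log x)^2 + 1` and `t = v u`. Since `log v = log t - log u`, we have
`L v ≤ 2 L t L u`, and `t L t ≤ 54 e^{t/2}`; hence the integrand is at most
`108 e^{-vu/2} / (v L v)`, whose integral over `(0, ∞)` is `216 / (v² L v)`.
Conversely, `(1/v, 2/v] ⊆ (0, a]`, and there `e^{-vu} ≥ e^{-2}`, `u ≥ 1/v` and
`|log u| ≤ log v`, so the integrand is at least `e^{-2} / (v L v)` on an interval of
length `1/v`. -/

open MeasureTheory Real Set

variable {a t u v : ℝ}

lemma sq_add_add_one_le (x y : ℝ) : (x + y) ^ 2 + 1 ≤ 2 * (x ^ 2 + 1) * (y ^ 2 + 1) := by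
  nlinarith [sq_nonneg (x - y), sq_nonneg (x * y)]

lemma mul_log_sq_le_four (ht : 0 < t) (ht1 : t ≤ 1) : t * log t ^ 2 ≤ 4 := by
  have hsq : t * log t ^ 2 = (log t * t ^ (1 / 2 : ℝ)) ^ 2 := by
    rw [mul_pow, ← rpow_natCast (t ^ _), ← rpow_mul ht.le]
    norm_num
    ring
  have hlt := abs_log_mul_self_rpow_lt t (1 / 2) ht ht1 one_half_pos
  rw [hsq, ← sq_abs]
  nlinarith [abs_nonneg (log t * t ^ (1 / 2 : ℝ))]

lemma mul_sq_log_add_one_le (ht : 0 < t) : t * (log t ^ 2 + 1) ≤ t ^ 3 + t + 4 := by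
  rcases le_total t 1 with ht1 | ht1
  · nlinarith [mul_log_sq_le_four ht ht1, pow_pos ht 3]
  · have hlog : log t ≤ t := (log_le_sub_one_of_pos ht).trans (by linarith)
    nlinarith [mul_le_mul hlog hlog (log_nonneg ht1) ht.le]

lemma mul_sq_log_add_one_le_exp (ht : 0 < t) : t * (log t ^ 2 + 1) ≤ 54 * exp (t / 2) := by
  have h3 := pow_div_factorial_le_exp _ (half_pos ht).le 3
  have h1 := pow_div_factorial_le_exp _ (half_pos ht).le 1
  have h0 := one_le_exp (half_pos ht).le
  -- `t ^ 3 ≤ 48 e^{t/2}`, `t ≤ 2 e^{t/2}` and `4 ≤ 4 e^{t/2}`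
  norm_num [Nat.factorial] at h3 h1
  nlinarith [mul_sq_log_add_one_le ht]

lemma exp_neg_mul_mul_div_le (hu : 0 < u) (hv : 0 < v) :
    exp (-(v * u)) * u / (log u ^ 2 + 1) ≤ 108 / (v * (log v ^ 2 + 1)) * exp (-(v / 2) * u) := by
  set t := v * u with ht
  have htpos : 0 < t := mul_pos hv hu
  have hlog : log v = log t + -log u := by rw [ht, log_mul hv.ne' hu.ne']; ring
  have hLv : log v ^ 2 + 1 ≤ 2 * (log t ^ 2 + 1) * (log u ^ 2 + 1) := by
    simpa only [hlog, neg_sq] using sq_add_add_one_le (log t) (-log u)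
  have hexp : exp (-t) * exp (t / 2) = exp (-(v / 2) * u) := by
    rw [← exp_add]; congr 1; ring
  rw [div_le_iff₀ (by positivity), div_mul_eq_mul_div, div_mul_eq_mul_div,
    le_div_iff₀ (by positivity)]
  calc exp (-t) * u * (v * (log v ^ 2 + 1))
      = exp (-t) * (t * (log v ^ 2 + 1)) := by ring
    _ ≤ exp (-t) * (t * (2 * (log t ^ 2 + 1) * (log u ^ 2 + 1))) := by gcongr
    _ = exp (-t) * (2 * (t * (log t ^ 2 + 1)) * (log u ^ 2 + 1)) := by ring
    _ ≤ exp (-t) * (2 * (54 * exp (t / 2)) * (log u ^ 2 + 1)) := by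
        gcongr exp (-t) * (2 * ?_ * _); exact mul_sq_log_add_one_le_exp htpos
    _ = 108 * exp (-(v / 2) * u) * (log u ^ 2 + 1) := by rw [← hexp]; ring

lemma integrableOn_exp_neg_mul_mul_div_Ioi (hv : 0 < v) :
    IntegrableOn (fun u => exp (-(v * u)) * u / (log u ^ 2 + 1)) (Ioi 0) := by
  refine Integrable.mono'
    ((integrableOn_exp_mul_Ioi (neg_lt_zero.2 (half_pos hv)) 0).const_mul
      (108 / (v * (log v ^ 2 + 1))))
    (Measurable.aestronglyMeasurable (by fun_prop))
    ((ae_restrict_iff' measurableSet_Ioi).2 (.of_forall fun u (hu : 0 < u) => ?_))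
  rw [norm_of_nonneg (by positivity)]
  exact exp_neg_mul_mul_div_le hu hv

lemma setIntegral_exp_neg_mul_mul_div_Ioi_le (hv : 0 < v) :
    ∫ u in Ioi 0, exp (-(v * u)) * u / (log u ^ 2 + 1) ≤ 216 / (v ^ 2 * (log v ^ 2 + 1)) := by
  have hexp := integrableOn_exp_mul_Ioi (neg_lt_zero.2 (half_pos hv)) 0
  calc ∫ u in Ioi 0, exp (-(v * u)) * u / (log u ^ 2 + 1)
      ≤ ∫ u in Ioi 0, 108 / (v * (log v ^ 2 + 1)) * exp (-(v / 2) * u) :=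
        setIntegral_mono_on (integrableOn_exp_neg_mul_mul_div_Ioi hv) (hexp.const_mul _)
          measurableSet_Ioi fun u hu => exp_neg_mul_mul_div_le hu hv
    _ = 216 / (v ^ 2 * (log v ^ 2 + 1)) := by
        rw [integral_const_mul, integral_exp_mul_Ioi (neg_lt_zero.2 (half_pos hv))]
        field_simp
        norm_num

lemma le_exp_neg_mul_mul_div (hu : 0 < u) (hu1 : u ≤ 1) (h1 : 1 ≤ v * u) (h2 : v * u ≤ 2) :
    exp (-2) / (v * (log v ^ 2 + 1)) ≤ exp (-(v * u)) * u / (log u ^ 2 + 1) := by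
  have hv : 0 < v := pos_of_mul_pos_left (one_pos.trans_le h1) hu.le
  have hlog_nonpos : log u ≤ 0 := log_nonpos hu.le hu1
  have hlog_ge : -log v ≤ log u := by
    have := log_nonneg h1
    rw [log_mul hv.ne' hu.ne'] at this
    linarith
  have hsq : log u ^ 2 ≤ log v ^ 2 := by nlinarith
  rw [div_le_div_iff₀ (by positivity) (by positivity)]
  have he : exp (-2) ≤ exp (-(v * u)) := exp_le_exp.2 (by linarith)
  calc exp (-2) * (log u ^ 2 + 1) ≤ exp (-(v * u)) * (v * u) * (log v ^ 2 + 1) := by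
        gcongr; nlinarith [exp_pos (-2)]
    _ = exp (-(v * u)) * u * (v * (log v ^ 2 + 1)) := by ring

lemma le_setIntegral_exp_neg_mul_mul_div_Ioc (ha : 0 < a) (ha1 : a ≤ 1) (hav : 2 ≤ a * v) :
    exp (-2) / (v ^ 2 * (log v ^ 2 + 1)) ≤
      ∫ u in Ioc 0 a, exp (-(v * u)) * u / (log u ^ 2 + 1) := by
  have hv : 0 < v := pos_of_mul_pos_right (two_pos.trans_le hav) ha.le
  have hsub : Ioc (1 / v) (2 / v) ⊆ Ioc 0 a := by
    refine Ioc_subset_Ioc (by positivity) ?_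
    rw [div_le_iff₀ hv]; linarith
  have hint : IntegrableOn (fun u => exp (-(v * u)) * u / (log u ^ 2 + 1)) (Ioc 0 a) :=
    (integrableOn_exp_neg_mul_mul_div_Ioi hv).mono_set Ioc_subset_Ioi_self
  calc exp (-2) / (v ^ 2 * (log v ^ 2 + 1))
      = ∫ _ in Ioc (1 / v) (2 / v), exp (-2) / (v * (log v ^ 2 + 1)) := by
        rw [setIntegral_const, volume_real_Ioc_of_le (by gcongr; norm_num), smul_eq_mul]
        field_simp
        ring
    _ ≤ ∫ u in Ioc (1 / v) (2 / v), exp (-(v * u)) * u / (log u ^ 2 + 1) := by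
        refine setIntegral_mono_on (integrableOn_const measure_Ioc_lt_top.ne)
          (hint.mono_set hsub) measurableSet_Ioc fun u hu =>
            le_exp_neg_mul_mul_div (hsub hu).1 ((hsub hu).2.trans ha1) ?_ ?_
        · linarith [(div_lt_iff₀ hv).1 hu.1]
        · linarith [(le_div_iff₀ hv).1 hu.2]
    _ ≤ ∫ u in Ioc 0 a, exp (-(v * u)) * u / (log u ^ 2 + 1) :=
        setIntegral_mono_set hint
          ((ae_restrict_iff' measurableSet_Ioc).2 (.of_forall fun u hu => by
            have : 0 < u := hu.1; positivity))
          hsub.eventuallyLE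

theorem stmt_5 :
    ∃ c : ℝ, 1 ≤ c ∧ ∀ a v : ℝ, 0 < a → a ≤ 1 → 0 < v → 2 ≤ a * v →
      c⁻¹ * (1 / (v ^ 2 * ((Real.log v) ^ 2 + 1)))
        ≤ (∫ u in Set.Ioc (0:ℝ) a, Real.exp (-(v * u)) * u / ((Real.log u) ^ 2 + 1)) ∧
      (∫ u in Set.Ioc (0:ℝ) a, Real.exp (-(v * u)) * u / ((Real.log u) ^ 2 + 1))
        ≤ c * (1 / (v ^ 2 * ((Real.log v) ^ 2 + 1))) := by
  refine ⟨216, by norm_num, fun a v ha ha1 hv hav => ⟨?_, ?_⟩⟩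
  · have hexp : (216 : ℝ)⁻¹ ≤ exp (-2) := by
      rw [exp_neg, show (2 : ℝ) = 1 + 1 by norm_num, exp_add]
      gcongr
      nlinarith [exp_one_lt_three, exp_pos 1]
    calc (216 : ℝ)⁻¹ * (1 / (v ^ 2 * (log v ^ 2 + 1)))
        ≤ exp (-2) * (1 / (v ^ 2 * (log v ^ 2 + 1))) := by gcongr
      _ = exp (-2) / (v ^ 2 * (log v ^ 2 + 1)) := mul_one_div _ _
      _ ≤ _ := le_setIntegral_exp_neg_mul_mul_div_Ioc ha ha1 hav
  · calc ∫ u in Ioc 0 a, exp (-(v * u)) * u / (log u ^ 2 + 1)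
        ≤ ∫ u in Ioi 0, exp (-(v * u)) * u / (log u ^ 2 + 1) :=
          setIntegral_mono_set (integrableOn_exp_neg_mul_mul_div_Ioi hv)
            ((ae_restrict_iff' measurableSet_Ioi).2
              (.of_forall fun u (hu : 0 < u) => by positivity))
            Ioc_subset_Ioi_self.eventuallyLE
      _ ≤ 216 / (v ^ 2 * (log v ^ 2 + 1)) := setIntegral_exp_neg_mul_mul_div_Ioi_le hv
      _ = 216 * (1 / (v ^ 2 * (log v ^ 2 + 1))) := (mul_one_div _ _).symm
end

section
/- There exists an absolute constant c ≥ 1 such that for every a with 0 ≤ a ≤ 1 and every v > 0 satisfying a·v ≤ 1, c⁻¹ · (1 − a)/((v + 1)^{3/2} · (1 + log(v + 1))) ≤ ∫_a^1 e^{−v·u} · u^{1/2}/(1 − log u) du ≤ c · (1 − a)/((v + 1)^{3/2} · (1 + log(v + 1))). -/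
open MeasureTheory Real Set

/-!
Write `scale v = v ^ (3/2) * (1 + log v)`. For `v ≤ 2` the integrand is at most `1`, and at least
`e⁻² / 4` on the upper half `((1 + a)/2, 1]` of the interval, while `scale (v + 1)` lies in
`[1, 27]`; so the integral is comparable to `1 - a`. For `v ≥ 2` the hypothesis `a v ≤ 1` gives
`a ≤ 1/2`, so `1 - a` is comparable to `1` and `scale (v + 1)` to `scale v`. The lower bound comes
from `(1/v, 2/v]`, where the integrand is at least `e⁻² v^(-1/2) / (1 + log v)`. For the upper
bound split `(0, 1]` at `1/v`: below, `√u ≤ v^(-1/2)` and `1 - log u ≥ 1 + log v`; above,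
`1 + log v ≤ (1 - log u) v u` and `t³ e⁻ᵗ ≤ 6` bound the integrand by
`6 u^(-3/2) / (v² (1 + log v))`, whose integral is at most `12 / scale v`.
-/

noncomputable section

namespace ExpSqrtLog

def integrand (v u : ℝ) : ℝ := exp (-(v * u)) * √u / (1 - log u)

def scale (v : ℝ) : ℝ := v ^ ((3 : ℝ) / 2) * (1 + log v)

def TwoSidedComparable (c x y : ℝ) : Prop := c⁻¹ * y ≤ x ∧ x ≤ c * y

theorem TwoSidedComparable.mono {c c' x y : ℝ} (h : TwoSidedComparable c x y) (hc : 0 < c)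
    (hcc' : c ≤ c') (hy : 0 ≤ y) : TwoSidedComparable c' x y :=
  ⟨(mul_le_mul_of_nonneg_right (inv_anti₀ hc hcc') hy).trans h.1,
    h.2.trans (mul_le_mul_of_nonneg_right hcc' hy)⟩

theorem rpow_three_halves {x : ℝ} (hx : 0 ≤ x) : x ^ ((3 : ℝ) / 2) = x * √x := by
  rw [show (3 : ℝ) / 2 = 1 + 1 / 2 by norm_num, rpow_add' hx (by norm_num), rpow_one,
    ← sqrt_eq_rpow]

theorem pow_three_mul_exp_neg_le {t : ℝ} (ht : 0 ≤ t) : t ^ 3 * exp (-t) ≤ 6 := by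
  have h := pow_div_factorial_le_exp t ht 3
  rw [exp_neg, ← div_eq_mul_inv, div_le_iff₀ (exp_pos t)]
  norm_num [Nat.factorial] at h
  linarith

theorem one_le_one_sub_log {u : ℝ} (h0 : 0 < u) (h1 : u ≤ 1) : 1 ≤ 1 - log u := by
  linarith [log_nonpos h0.le h1]

/-- `(1 - log u) (1 + log (v u)) = 1 + log v - log u log (v u)` with `log u ≤ 0 ≤ log (v u)`. -/
theorem one_add_log_le_one_sub_log_mul {u v : ℝ} (hu0 : 0 < u) (hu1 : u ≤ 1) (hvu : 1 ≤ v * u) :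
    1 + log v ≤ (1 - log u) * (v * u) := by
  have hv : 0 < v := pos_of_mul_pos_left (by linarith) hu0.le
  have hlog : log (v * u) = log v + log u := log_mul hv.ne' hu0.ne'
  have hx := log_nonpos hu0.le hu1
  have hy := log_nonneg hvu
  have hy' := log_le_sub_one_of_pos (by linarith : 0 < v * u)
  nlinarith [mul_nonneg (neg_nonneg.2 hx) hy, one_le_one_sub_log hu0 hu1]

theorem setIntegral_Ioc_le_mul_of_le {f : ℝ → ℝ} {s t M : ℝ} (hst : s ≤ t)
    (hf : IntegrableOn f (Ioc s t)) (h : ∀ u ∈ Ioc s t, f u ≤ M) :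
    ∫ u in Ioc s t, f u ≤ M * (t - s) := by
  have := setIntegral_mono_on hf (integrableOn_const measure_Ioc_lt_top.ne) measurableSet_Ioc h
  rwa [setIntegral_const, volume_real_Ioc_of_le hst, smul_eq_mul, mul_comm] at this

theorem mul_sub_le_setIntegral_Ioc {f : ℝ → ℝ} {a b s t m : ℝ} (hf : IntegrableOn f (Ioc a b))
    (hf0 : ∀ u ∈ Ioc a b, 0 ≤ f u) (has : a ≤ s) (hst : s ≤ t) (htb : t ≤ b)
    (hm : ∀ u ∈ Ioc s t, m ≤ f u) : m * (t - s) ≤ ∫ u in Ioc a b, f u := by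
  have hsub : Ioc s t ⊆ Ioc a b := Ioc_subset_Ioc has htb
  calc m * (t - s) ≤ ∫ u in Ioc s t, f u := by
        simpa [volume_real_Ioc_of_le hst] using
          setIntegral_ge_of_const_le_real measurableSet_Ioc measure_Ioc_lt_top.ne hm
            (hf.mono_set hsub)
    _ ≤ ∫ u in Ioc a b, f u := by
        refine setIntegral_mono_set hf ?_ hsub.eventuallyLE
        filter_upwards [ae_restrict_mem measurableSet_Ioc] with u hu using hf0 u hu

theorem integrand_nonneg {v u : ℝ} (h0 : 0 < u) (h1 : u ≤ 1) : 0 ≤ integrand v u := by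
  have := one_le_one_sub_log h0 h1
  unfold integrand
  positivity

theorem integrand_le_one {v u : ℝ} (hv : 0 ≤ v) (h0 : 0 < u) (h1 : u ≤ 1) :
    integrand v u ≤ 1 := by
  have hden := one_le_one_sub_log h0 h1
  have hexp : exp (-(v * u)) ≤ 1 := exp_le_one_iff.2 (by nlinarith)
  have hsqrt : √u ≤ 1 := sqrt_le_one.2 h1
  rw [integrand, div_le_one (by linarith)]
  nlinarith [sqrt_nonneg u]

theorem integrableOn_integrand {v : ℝ} (hv : 0 ≤ v) : IntegrableOn (integrand v) (Ioc 0 1) := by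
  refine IntegrableOn.of_bound measure_Ioc_lt_top ?_ 1 ?_
  · exact (by unfold integrand; fun_prop : Measurable (integrand v)).aestronglyMeasurable
  · filter_upwards [ae_restrict_mem measurableSet_Ioc] with u hu
    rw [norm_of_nonneg (integrand_nonneg hu.1 hu.2)]
    exact integrand_le_one hv hu.1 hu.2

theorem div_le_integrand {v s t u : ℝ} (hv : 0 ≤ v) (hs : 0 < s) (hu : u ∈ Ioc s t)
    (ht : t ≤ 1) : exp (-(v * t)) * √s / (1 - log s) ≤ integrand v u := by
  have hu0 : 0 < u := hs.trans hu.1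
  have hlog : log s ≤ log u := log_le_log hs hu.1.le
  have hden := one_le_one_sub_log hu0 (hu.2.trans ht)
  have hexp : exp (-(v * t)) ≤ exp (-(v * u)) := exp_le_exp.2 (by nlinarith [hu.2])
  exact div_le_div₀ (by positivity) (mul_le_mul hexp (sqrt_le_sqrt hu.1.le) (sqrt_nonneg _)
    (exp_pos _).le) (by linarith) (by linarith)

theorem mul_div_le_integral_integrand {a v s t : ℝ} (hv : 0 ≤ v) (ha : 0 ≤ a) (has : a ≤ s)
    (hs : 0 < s) (hst : s ≤ t) (ht : t ≤ 1) :
    (t - s) * (exp (-(v * t)) * √s / (1 - log s)) ≤ ∫ u in Ioc a 1, integrand v u := by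
  rw [mul_comm]
  exact mul_sub_le_setIntegral_Ioc
    ((integrableOn_integrand hv).mono_set (Ioc_subset_Ioc ha le_rfl))
    (fun u hu => integrand_nonneg (ha.trans_lt hu.1) hu.2) has hst ht
    (fun u hu => div_le_integrand hv hs hu ht)

theorem integral_integrand_le_one_sub {a v : ℝ} (hv : 0 ≤ v) (ha0 : 0 ≤ a) (ha1 : a ≤ 1) :
    ∫ u in Ioc a 1, integrand v u ≤ 1 - a := by
  simpa using setIntegral_Ioc_le_mul_of_le ha1
    ((integrableOn_integrand hv).mono_set (Ioc_subset_Ioc ha0 le_rfl))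
    (fun u hu => integrand_le_one hv (ha0.trans_lt hu.1) hu.2)

theorem integrand_le_of_le_inv {v u : ℝ} (hv : 1 ≤ v) (hu0 : 0 < u) (hu : u ≤ v⁻¹) :
    integrand v u ≤ (√v * (1 + log v))⁻¹ := by
  have hv0 : 0 < v := by linarith
  have hlog : log u ≤ -log v := by simpa [log_inv] using log_le_log hu0 hu
  have hexp : exp (-(v * u)) ≤ 1 := exp_le_one_iff.2 (by nlinarith)
  have hsqrt : √u ≤ (√v)⁻¹ := by simpa [sqrt_inv] using sqrt_le_sqrt hu
  have hL : 0 < 1 + log v := by linarith [log_nonneg hv]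
  rw [integrand, mul_inv, ← div_eq_mul_inv]
  gcongr
  · exact (mul_le_of_le_one_left (sqrt_nonneg u) hexp).trans hsqrt
  · linarith

theorem integrand_le_mul_rpow {v u : ℝ} (hv : 0 < v) (hu : u ∈ Ioc v⁻¹ 1) :
    integrand v u ≤ 6 / (v ^ 2 * (1 + log v)) * u ^ (-(3 : ℝ) / 2) := by
  have hu0 : 0 < u := (inv_pos.2 hv).trans hu.1
  have hvu : 1 ≤ v * u := by
    have := mul_lt_mul_of_pos_left hu.1 hv
    rw [mul_inv_cancel₀ hv.ne'] at this
    exact this.le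
  have hL : 0 < 1 + log v := by linarith [log_nonneg (by nlinarith [hu.2] : 1 ≤ v)]
  have hden := one_le_one_sub_log hu0 hu.2
  have hsq : √u * √u = u := mul_self_sqrt hu0.le
  rw [show -(3 : ℝ) / 2 = -((3 : ℝ) / 2) by ring, rpow_neg hu0.le, rpow_three_halves hu0.le,
    ← div_eq_mul_inv, div_div, integrand, div_le_div_iff₀ (by linarith) (by positivity)]
  calc exp (-(v * u)) * √u * (v ^ 2 * (1 + log v) * (u * √u))
      = exp (-(v * u)) * (v * u) ^ 2 * (1 + log v) := by
        linear_combination exp (-(v * u)) * v ^ 2 * (1 + log v) * u * hsq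
    _ ≤ exp (-(v * u)) * (v * u) ^ 2 * ((1 - log u) * (v * u)) := by
        gcongr
        exact one_add_log_le_one_sub_log_mul hu0 hu.2 hvu
    _ = (v * u) ^ 3 * exp (-(v * u)) * (1 - log u) := by ring
    _ ≤ 6 * (1 - log u) := by
        gcongr
        exact pow_three_mul_exp_neg_le (by linarith)

theorem setIntegral_rpow_neg_three_halves_le {v : ℝ} (hv : 1 ≤ v) :
    ∫ u in Ioc v⁻¹ 1, u ^ (-(3 : ℝ) / 2) ≤ 2 * √v := by
  have hv0 : 0 < v⁻¹ := inv_pos.2 (by linarith)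
  have hnot : (0 : ℝ) ∉ uIcc v⁻¹ 1 := notMem_uIcc_of_lt hv0 one_pos
  rw [← intervalIntegral.integral_of_le (inv_le_one_of_one_le₀ hv),
    integral_rpow (Or.inr ⟨by norm_num, hnot⟩), one_rpow,
    show -(3 : ℝ) / 2 + 1 = -(1 / 2) by norm_num, rpow_neg hv0.le, inv_rpow (by linarith),
    inv_inv, ← sqrt_eq_rpow]
  linarith

theorem scale_eq {v : ℝ} (hv : 0 ≤ v) : scale v = v * √v * (1 + log v) := by
  rw [scale, rpow_three_halves hv]

theorem scale_le_scale {v w : ℝ} (hv : 1 ≤ v) (hvw : v ≤ w) : scale v ≤ scale w := by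
  have hL : 0 ≤ 1 + log v := by linarith [log_nonneg hv]
  unfold scale
  gcongr
  exact rpow_nonneg (by linarith) _

theorem one_le_scale {v : ℝ} (hv : 1 ≤ v) : 1 ≤ scale v := by
  simpa [scale] using scale_le_scale le_rfl hv

theorem scale_three_le : scale 3 ≤ 27 := by
  have hpow : (3 : ℝ) ^ ((3 : ℝ) / 2) ≤ 3 ^ (2 : ℝ) :=
    rpow_le_rpow_of_exponent_le (by norm_num) (by norm_num)
  have hlog : log 3 ≤ 2 := by linarith [log_le_sub_one_of_pos (by norm_num : (0 : ℝ) < 3)]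
  rw [scale]
  norm_num at hpow
  nlinarith [rpow_nonneg (by norm_num : (0 : ℝ) ≤ 3) ((3 : ℝ) / 2),
    log_nonneg (by norm_num : (1 : ℝ) ≤ 3)]

theorem scale_add_one_le {v : ℝ} (hv : 1 ≤ v) : scale (v + 1) ≤ 8 * scale v := by
  have hv0 : 0 ≤ v := by linarith
  have hpow : (v + 1) ^ ((3 : ℝ) / 2) ≤ 4 * v ^ ((3 : ℝ) / 2) := by
    calc (v + 1) ^ ((3 : ℝ) / 2) ≤ (2 * v) ^ ((3 : ℝ) / 2) := by gcongr; linarith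
      _ = 2 ^ ((3 : ℝ) / 2) * v ^ ((3 : ℝ) / 2) := mul_rpow (by norm_num) hv0
      _ ≤ 2 ^ (2 : ℝ) * v ^ ((3 : ℝ) / 2) := by
          gcongr
          · norm_num
          · norm_num
      _ = 4 * v ^ ((3 : ℝ) / 2) := by norm_num
  have hlog : 1 + log (v + 1) ≤ 2 * (1 + log v) := by
    have h2v : log (v + 1) ≤ log 2 + log v := by
      rw [← log_mul two_ne_zero (by linarith)]
      exact log_le_log (by linarith) (by linarith)
    linarith [log_le_sub_one_of_pos (by norm_num : (0 : ℝ) < 2), log_nonneg hv]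
  unfold scale
  calc (v + 1) ^ ((3 : ℝ) / 2) * (1 + log (v + 1))
      ≤ 4 * v ^ ((3 : ℝ) / 2) * (2 * (1 + log v)) := by
        gcongr
        linarith [log_nonneg (by linarith : (1 : ℝ) ≤ v + 1)]
    _ = 8 * (v ^ ((3 : ℝ) / 2) * (1 + log v)) := by ring

theorem integral_integrand_le_div_scale {a v : ℝ} (ha : 0 ≤ a) (hv : 1 ≤ v) :
    ∫ u in Ioc a 1, integrand v u ≤ 13 / scale v := by
  have hv0 : 0 < v := by linarith
  have hb0 : 0 ≤ v⁻¹ := inv_nonneg.2 hv0.le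
  have hb1 : v⁻¹ ≤ 1 := inv_le_one_of_one_le₀ hv
  have hL : 0 < 1 + log v := by linarith [log_nonneg hv]
  have hint := integrableOn_integrand hv0.le
  have hnear : ∫ u in Ioc 0 v⁻¹, integrand v u ≤ 1 / scale v := by
    refine (setIntegral_Ioc_le_mul_of_le hb0 (hint.mono_set (Ioc_subset_Ioc le_rfl hb1))
      fun u hu => integrand_le_of_le_inv hv hu.1 hu.2).trans_eq ?_
    rw [scale_eq hv0.le]
    field_simp
    ring
  have hfar : ∫ u in Ioc v⁻¹ 1, integrand v u ≤ 12 / scale v := by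
    have hrpow : IntegrableOn (fun u : ℝ => u ^ (-(3 : ℝ) / 2)) (Ioc v⁻¹ 1) := by
      refine (intervalIntegrable_iff_integrableOn_Ioc_of_le hb1).1 ?_
      exact intervalIntegral.intervalIntegrable_rpow
        (Or.inr (notMem_uIcc_of_lt (inv_pos.2 hv0) one_pos))
    calc ∫ u in Ioc v⁻¹ 1, integrand v u
        ≤ ∫ u in Ioc v⁻¹ 1, 6 / (v ^ 2 * (1 + log v)) * u ^ (-(3 : ℝ) / 2) :=
          setIntegral_mono_on (hint.mono_set (Ioc_subset_Ioc hb0 le_rfl)) (hrpow.const_mul _)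
            measurableSet_Ioc fun u hu => integrand_le_mul_rpow hv0 hu
      _ ≤ 6 / (v ^ 2 * (1 + log v)) * (2 * √v) := by
          rw [integral_const_mul]
          gcongr
          exact setIntegral_rpow_neg_three_halves_le hv
      _ = 12 / scale v := by
          rw [scale_eq hv0.le]
          field_simp
          rw [sq_sqrt hv0.le]
          ring
  calc ∫ u in Ioc a 1, integrand v u ≤ ∫ u in Ioc 0 1, integrand v u := by
        refine setIntegral_mono_set hint ?_ (Ioc_subset_Ioc ha le_rfl).eventuallyLE
        filter_upwards [ae_restrict_mem measurableSet_Ioc] with u hu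
        exact integrand_nonneg hu.1 hu.2
    _ = (∫ u in Ioc 0 v⁻¹, integrand v u) + ∫ u in Ioc v⁻¹ 1, integrand v u := by
        rw [← setIntegral_union (Ioc_disjoint_Ioc_of_le le_rfl) measurableSet_Ioc
          (hint.mono_set (Ioc_subset_Ioc le_rfl hb1)) (hint.mono_set (Ioc_subset_Ioc hb0 le_rfl)),
          Ioc_union_Ioc_eq_Ioc hb0 hb1]
    _ ≤ 1 / scale v + 12 / scale v := add_le_add hnear hfar
    _ = 13 / scale v := by ring

theorem exp_neg_two_div_eight_mul_le_integral {a v : ℝ} (ha0 : 0 ≤ a) (ha1 : a ≤ 1) (hv0 : 0 ≤ v)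
    (hv2 : v ≤ 2) : exp (-2) / 8 * (1 - a) ≤ ∫ u in Ioc a 1, integrand v u := by
  set s := (1 + a) / 2 with hs
  have hs0 : 1 / 2 ≤ s := by linarith
  have hsqrt : 1 / 2 ≤ √s := (le_sqrt (by norm_num) (by linarith)).2 (by nlinarith)
  have hlog : 1 - log s ≤ 2 := by
    have := one_sub_inv_le_log_of_pos (by linarith : 0 < s)
    have : s⁻¹ ≤ 2 := by rw [inv_le_comm₀ (by linarith) two_pos]; linarith
    linarith
  calc exp (-2) / 8 * (1 - a) = (1 - s) * (exp (-2) * (1 / 2) / 2) := by ring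
    _ ≤ (1 - s) * (exp (-(v * 1)) * √s / (1 - log s)) := by
        gcongr
        · linarith
        · linarith [one_le_one_sub_log (by linarith : 0 < s) (by linarith)]
        · linarith
    _ ≤ ∫ u in Ioc a 1, integrand v u :=
        mul_div_le_integral_integrand hv0 ha0 (by linarith) (by linarith) (by linarith) le_rfl

theorem exp_neg_two_div_scale_le_integral {a v : ℝ} (ha0 : 0 ≤ a) (hav : a ≤ v⁻¹) (hv : 2 ≤ v) :
    exp (-2) / scale v ≤ ∫ u in Ioc a 1, integrand v u := by
  have hv0 : 0 < v := by linarith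
  have hb0 : 0 < v⁻¹ := inv_pos.2 hv0
  calc exp (-2) / scale v
      = (2 * v⁻¹ - v⁻¹) * (exp (-(v * (2 * v⁻¹))) * √v⁻¹ / (1 - log v⁻¹)) := by
        rw [scale_eq hv0.le, sqrt_inv, log_inv, show v * (2 * v⁻¹) = 2 by field_simp]
        field_simp
        ring
    _ ≤ ∫ u in Ioc a 1, integrand v u :=
        mul_div_le_integral_integrand hv0.le ha0 hav hb0 (by linarith)
          (by rw [← div_eq_mul_inv, div_le_one hv0]; exact hv)

theorem twoSidedComparable_of_le_two {a v : ℝ} (ha0 : 0 ≤ a) (ha1 : a ≤ 1) (hv0 : 0 < v)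
    (hv2 : v ≤ 2) :
    TwoSidedComparable (27 * exp 2) (∫ u in Ioc a 1, integrand v u) ((1 - a) / scale (v + 1)) := by
  have hD1 : 1 ≤ scale (v + 1) := one_le_scale (by linarith)
  have hD27 : scale (v + 1) ≤ 27 :=
    (scale_le_scale (w := 3) (by linarith) (by linarith)).trans scale_three_le
  have ha : 0 ≤ 1 - a := by linarith
  constructor
  · calc (27 * exp 2)⁻¹ * ((1 - a) / scale (v + 1)) ≤ exp (-2) / 27 * (1 - a) := by
          rw [mul_inv, exp_neg, inv_mul_eq_div, div_eq_mul_one_div (exp 2)⁻¹]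
          gcongr
          exact div_le_self ha hD1
      _ ≤ exp (-2) / 8 * (1 - a) := by gcongr; norm_num
      _ ≤ ∫ u in Ioc a 1, integrand v u :=
          exp_neg_two_div_eight_mul_le_integral ha0 ha1 hv0.le hv2
  · calc ∫ u in Ioc a 1, integrand v u ≤ 1 - a := integral_integrand_le_one_sub hv0.le ha0 ha1
      _ = 27 * ((1 - a) / 27) := by ring
      _ ≤ 27 * ((1 - a) / scale (v + 1)) := by gcongr
      _ ≤ 27 * exp 2 * ((1 - a) / scale (v + 1)) :=
          mul_le_mul_of_nonneg_right (le_mul_of_one_le_right (by norm_num) (one_le_exp two_pos.le))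
            (div_nonneg ha (by linarith))

theorem twoSidedComparable_of_two_le {a v : ℝ} (ha0 : 0 ≤ a) (hav : a * v ≤ 1) (hv2 : 2 ≤ v) :
    TwoSidedComparable (208 * exp 2) (∫ u in Ioc a 1, integrand v u) ((1 - a) / scale (v + 1)) := by
  have hv0 : 0 < v := by linarith
  have ha : a ≤ v⁻¹ := by rw [← one_div, le_div_iff₀ hv0]; exact hav
  have ha2 : 1 / 2 ≤ 1 - a := by linarith [inv_anti₀ two_pos hv2]
  have hD : 0 < scale v := zero_lt_one.trans_le (one_le_scale (by linarith))
  have hDD : scale v ≤ scale (v + 1) := scale_le_scale (by linarith) (by linarith)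
  have hD' : 0 < scale (v + 1) := hD.trans_le hDD
  have hratio : (1 - a) / scale (v + 1) ≤ 1 / scale v :=
    div_le_div₀ zero_le_one (by linarith) hD hDD
  constructor
  · calc (208 * exp 2)⁻¹ * ((1 - a) / scale (v + 1)) ≤ (exp 2)⁻¹ * (1 / scale v) := by
          gcongr
          exact le_mul_of_one_le_left (exp_pos 2).le (by norm_num : (1 : ℝ) ≤ 208)
      _ = exp (-2) / scale v := by rw [exp_neg]; ring
      _ ≤ ∫ u in Ioc a 1, integrand v u := exp_neg_two_div_scale_le_integral ha0 ha hv2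
  · calc ∫ u in Ioc a 1, integrand v u ≤ 13 / scale v :=
          integral_integrand_le_div_scale ha0 (by linarith)
      _ ≤ 104 / scale (v + 1) := by
          rw [div_le_div_iff₀ hD hD']
          linarith [scale_add_one_le (by linarith : 1 ≤ v)]
      _ = 208 * ((1 / 2) / scale (v + 1)) := by ring
      _ ≤ 208 * ((1 - a) / scale (v + 1)) := by gcongr
      _ ≤ 208 * exp 2 * ((1 - a) / scale (v + 1)) :=
          mul_le_mul_of_nonneg_right (le_mul_of_one_le_right (by norm_num) (one_le_exp two_pos.le))
            (div_nonneg (by linarith) hD'.le)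

end ExpSqrtLog

end

theorem stmt_6 :
    ∃ c : ℝ, 1 ≤ c ∧ ∀ a v : ℝ, 0 ≤ a → a ≤ 1 → 0 < v → a * v ≤ 1 →
      c⁻¹ * ((1 - a) / ((v + 1) ^ ((3:ℝ)/2) * (1 + Real.log (v + 1))))
        ≤ (∫ u in Set.Ioc a 1, Real.exp (-(v * u)) * Real.sqrt u / (1 - Real.log u)) ∧
      (∫ u in Set.Ioc a 1, Real.exp (-(v * u)) * Real.sqrt u / (1 - Real.log u))
        ≤ c * ((1 - a) / ((v + 1) ^ ((3:ℝ)/2) * (1 + Real.log (v + 1)))) := by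
  have he : 1 ≤ exp 2 := one_le_exp (by norm_num)
  refine ⟨208 * exp 2, by nlinarith, fun a v ha0 ha1 hv0 hav => ?_⟩
  have hD : 0 ≤ (1 - a) / ExpSqrtLog.scale (v + 1) :=
    div_nonneg (by linarith) (zero_le_one.trans (ExpSqrtLog.one_le_scale (by linarith)))
  rcases le_or_gt v 2 with hv2 | hv2
  · exact (ExpSqrtLog.twoSidedComparable_of_le_two ha0 ha1 hv0 hv2).mono (by positivity)
      (by nlinarith) hD
  · exact ExpSqrtLog.twoSidedComparable_of_two_le ha0 hav hv2.le
end

section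
/- There exists an absolute constant c ≥ 1 such that for every v ≥ 2 and every a with 0 ≤ a ≤ 1/v, c⁻¹ / log v ≤ ∫_{v·a}^{v} e^{−s} · s^{1/2} / (1 − log s + log v) ds ≤ c / log v. -/
/-!
Write `L = log v` and `D(s) = 1 + log (v / s)` for the denominator. Since `√s ≤ e^{s/2}`, the
numerator is at most `e^{-s/2}`. For `s ≤ √v` we have `D(s) ≥ L/2`, and for `s ≥ √v` the spare
factor `e^{-s/4} ≤ e^{-√v/4}` is `O(1/L)`; so the integrand is at most `(8/L) e^{-s/4}` on `[0, v]`,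
whose integral is at most `32/L`. Conversely `[1, 2] ⊆ [v a, v]`, and there the integrand is at
least `e^{-2}/(3L)`.
-/
open MeasureTheory Real

-- `log 0 = 0`, so `s = 0` is allowed once `log t ≥ 0`.
theorem log_le_log_of_nonneg {s t : ℝ} (hs : 0 ≤ s) (hst : s ≤ t) (ht : 1 ≤ t) :
    log s ≤ log t := by
  rcases hs.eq_or_lt with rfl | hs
  · simpa using log_nonneg ht
  · exact log_le_log hs hst

theorem sqrt_le_exp_half (s : ℝ) : √s ≤ exp (s / 2) := by
  rcases le_or_gt 0 s with hs | hs
  · nlinarith [sq_nonneg (√s - 1), sq_sqrt hs, add_one_le_exp (s / 2)]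
  · rw [sqrt_eq_zero_of_nonpos hs.le]; positivity

theorem log_le_eight_mul_exp_sqrt_div_four {v : ℝ} (hv : 0 < v) : log v ≤ 8 * exp (√v / 4) := by
  have h := log_le_sub_one_of_pos (sqrt_pos.2 hv)
  rw [log_sqrt hv.le] at h
  linarith [add_one_le_exp (√v / 4)]

theorem exp_neg_mul_sqrt_le (s : ℝ) : exp (-s) * √s ≤ exp (-s / 2) :=
  calc exp (-s) * √s ≤ exp (-s) * exp (s / 2) := by gcongr; exact sqrt_le_exp_half s
    _ = exp (-s / 2) := by rw [← exp_add]; ring_nf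

theorem integral_exp_neg_div {k : ℝ} (hk : k ≠ 0) (p q : ℝ) :
    ∫ s in p..q, exp (-s / k) = k * (exp (-p / k) - exp (-q / k)) := by
  have hderiv : ∀ s, HasDerivAt (fun t => -k * exp (-t / k)) (exp (-s / k)) s := fun s => by
    have h := (((hasDerivAt_neg s).div_const k).exp.const_mul (-k))
    rwa [show -k * (exp (-s / k) * (-1 / k)) = exp (-s / k) by field_simp] at h
  rw [intervalIntegral.integral_eq_sub_of_hasDerivAt (fun s _ => hderiv s)
    ((by fun_prop : Continuous fun s => exp (-s / k)).intervalIntegrable _ _)]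
  ring

noncomputable def logDampedIntegrand (v s : ℝ) : ℝ := exp (-s) * √s / (1 - log s + log v)

theorem one_le_one_sub_log_add_log {s v : ℝ} (hv : 1 ≤ v) (hs : 0 ≤ s) (hsv : s ≤ v) :
    1 ≤ 1 - log s + log v := by
  linarith [log_le_log_of_nonneg hs hsv hv]

theorem logDampedIntegrand_nonneg {s v : ℝ} (hv : 1 ≤ v) (hs : 0 ≤ s) (hsv : s ≤ v) :
    0 ≤ logDampedIntegrand v s :=
  div_nonneg (by positivity) (zero_le_one.trans (one_le_one_sub_log_add_log hv hs hsv))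

theorem logDampedIntegrand_le {s v : ℝ} (hv : 1 < v) (hs : 0 ≤ s) (hsv : s ≤ v) :
    logDampedIntegrand v s ≤ 8 / log v * exp (-s / 4) := by
  have hL : 0 < log v := log_pos hv
  have hD := one_le_one_sub_log_add_log hv.le hs hsv
  rcases le_total s √v with hs_small | hs_large
  · have hlog : log s ≤ log v / 2 := by
      rw [← log_sqrt (by positivity)]
      exact log_le_log_of_nonneg hs hs_small (one_le_sqrt.2 hv.le)
    calc logDampedIntegrand v s ≤ exp (-s / 2) / (log v / 2) :=
          div_le_div₀ (by positivity) (exp_neg_mul_sqrt_le s) (by positivity) (by linarith)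
      _ = 2 / log v * exp (-s / 2) := by field_simp
      _ ≤ 8 / log v * exp (-s / 4) :=
          mul_le_mul (by gcongr; norm_num) (exp_le_exp.2 (by linarith)) (by positivity)
            (by positivity)
  · have hdecay : exp (-√v / 4) ≤ 8 / log v := by
      rw [le_div_iff₀ hL, neg_div, exp_neg, inv_mul_le_iff₀ (exp_pos _)]
      linarith [log_le_eight_mul_exp_sqrt_div_four (zero_lt_one.trans hv)]
    calc logDampedIntegrand v s ≤ exp (-s / 2) / 1 :=
          div_le_div₀ (by positivity) (exp_neg_mul_sqrt_le s) one_pos hD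
      _ = exp (-s / 4) * exp (-s / 4) := by rw [div_one, ← exp_add]; ring_nf
      _ ≤ 8 / log v * exp (-s / 4) := by
          gcongr
          exact (exp_le_exp.2 (by linarith)).trans hdecay

theorem measurable_logDampedIntegrand (v : ℝ) : Measurable (logDampedIntegrand v) := by
  unfold logDampedIntegrand
  fun_prop

theorem intervalIntegrable_logDampedIntegrand {v p q : ℝ} (hv : 1 < v) (hp : 0 ≤ p) (hpq : p ≤ q)
    (hq : q ≤ v) : IntervalIntegrable (logDampedIntegrand v) volume p q := by
  rw [intervalIntegrable_iff_integrableOn_Ioc_of_le hpq]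
  refine Integrable.mono' ((by fun_prop : Continuous fun s => 8 / log v * exp (-s / 4))
    |>.integrableOn_Icc.mono_set Set.Ioc_subset_Icc_self)
    (measurable_logDampedIntegrand v).aestronglyMeasurable ?_
  filter_upwards [ae_restrict_mem measurableSet_Ioc] with s ⟨hps, hsq⟩
  rw [norm_of_nonneg (logDampedIntegrand_nonneg hv.le (by linarith) (by linarith))]
  exact logDampedIntegrand_le hv (by linarith) (by linarith)

theorem integral_logDampedIntegrand_le {v p : ℝ} (hv : 1 < v) (hp : 0 ≤ p) (hpv : p ≤ v) :
    ∫ s in p..v, logDampedIntegrand v s ≤ 32 / log v := by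
  have hL : 0 < log v := log_pos hv
  calc ∫ s in p..v, logDampedIntegrand v s ≤ ∫ s in p..v, 8 / log v * exp (-s / 4) :=
        intervalIntegral.integral_mono_on hpv
          (intervalIntegrable_logDampedIntegrand hv hp hpv le_rfl)
          ((by fun_prop : Continuous fun s => 8 / log v * exp (-s / 4)).intervalIntegrable _ _)
          fun s hs => logDampedIntegrand_le hv (hp.trans hs.1) hs.2
    _ = 8 / log v * (4 * (exp (-p / 4) - exp (-v / 4))) := by
        rw [intervalIntegral.integral_const_mul, integral_exp_neg_div four_ne_zero]
    _ ≤ 8 / log v * 4 := by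
        gcongr
        linarith [exp_le_one_iff.2 (by linarith : -p / 4 ≤ 0), exp_pos (-v / 4)]
    _ = 32 / log v := by ring

theorem div_log_le_logDampedIntegrand {v s : ℝ} (hv : 2 ≤ v) (hs1 : 1 ≤ s) (hs2 : s ≤ 2) :
    exp (-2) / (3 * log v) ≤ logDampedIntegrand v s := by
  have hlog2 : 1 / 2 < log v :=
    lt_of_lt_of_le (by linarith [log_two_gt_d9]) (log_le_log two_pos hv)
  have hnum : exp (-2) ≤ exp (-s) * √s := by
    rw [← mul_one (exp (-2))]
    exact mul_le_mul (exp_le_exp.2 (by linarith)) (one_le_sqrt.2 hs1) zero_le_one (exp_pos _).le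
  exact div_le_div₀ (by positivity) hnum
    (by linarith [one_le_one_sub_log_add_log (by linarith) (by linarith) (hs2.trans hv)])
    (by linarith [log_nonneg hs1])

theorem div_log_le_integral_logDampedIntegrand {v p : ℝ} (hv : 2 ≤ v) (hp : 0 ≤ p) (hp1 : p ≤ 1) :
    exp (-2) / (3 * log v) ≤ ∫ s in p..v, logDampedIntegrand v s :=
  calc exp (-2) / (3 * log v) = ∫ _ in (1 : ℝ)..2, exp (-2) / (3 * log v) := by norm_num
    _ ≤ ∫ s in (1 : ℝ)..2, logDampedIntegrand v s :=
        intervalIntegral.integral_mono_on one_le_two intervalIntegrable_const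
          (intervalIntegrable_logDampedIntegrand (by linarith) zero_le_one one_le_two hv)
          fun s hs => div_log_le_logDampedIntegrand hv hs.1 hs.2
    _ ≤ ∫ s in p..v, logDampedIntegrand v s :=
        intervalIntegral.integral_mono_interval hp1 one_le_two hv
          ((ae_restrict_mem measurableSet_Ioc).mono fun s hs =>
            logDampedIntegrand_nonneg (by linarith) (hp.trans hs.1.le) hs.2)
          (intervalIntegrable_logDampedIntegrand (by linarith) hp (by linarith) le_rfl)

theorem stmt_8 :
    ∃ c : ℝ, 1 ≤ c ∧ ∀ v a : ℝ, 2 ≤ v → 0 ≤ a → a ≤ 1 / v →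
      c⁻¹ / Real.log v
        ≤ (∫ s in (v * a)..v, Real.exp (-s) * Real.sqrt s / (1 - Real.log s + Real.log v)) ∧
      (∫ s in (v * a)..v, Real.exp (-s) * Real.sqrt s / (1 - Real.log s + Real.log v))
        ≤ c / Real.log v := by
  refine ⟨max 32 (3 * exp 2), le_max_of_le_left (by norm_num), fun v a hv ha hav => ?_⟩
  have hL : 0 < log v := log_pos (by linarith)
  have hva : 0 ≤ v * a := mul_nonneg (by linarith) ha
  have hva1 : v * a ≤ 1 := by
    calc v * a ≤ v * (1 / v) := mul_le_mul_of_nonneg_left hav (by linarith)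
      _ = 1 := by field_simp
  change _ ≤ ∫ s in (v * a)..v, logDampedIntegrand v s ∧
    ∫ s in (v * a)..v, logDampedIntegrand v s ≤ _
  constructor
  · refine le_trans ?_ (div_log_le_integral_logDampedIntegrand hv hva hva1)
    rw [show exp (-2) / (3 * log v) = (3 * exp 2)⁻¹ / log v by rw [exp_neg]; field_simp]
    gcongr
    exact le_max_right _ _
  · exact (integral_logDampedIntegrand_le (by linarith) hva (by linarith)).trans
      (by gcongr; exact le_max_left _ _)
end

section
/- Let μ > 0. There exists a constant c = c(μ) ≥ 1 such that for every x > 1 and every t > 0, writing m = max(t, x) and λ = x − 1, one has c⁻¹ / (m^μ + λ^{2μ}) ≤ ∫_m^∞ s^{−μ−1} e^{−λ²/(2s)} ds ≤ c / (m^μ + λ^{2μ}). -/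
/-!
Write `a = (x - 1)²` and `M = max m a`. On `(M, ∞)` the factor `exp (-a / (2s))` is at least
`e⁻¹`, so the integral is at least `e⁻¹ M^(-μ) / μ`, and `M^μ ≤ m^μ + a^μ`. Conversely, dropping
the exponential bounds the integral by `m^(-μ) / μ`, while `u^p e^(-u) ≤ p^p` (with `p = μ + 1`)
bounds the integrand by `(2p / a)^p` on `(0, a]`, so the integral over all of `(0, ∞)` is
`O(a^(-μ))`. Adding `m^μ` times the first bound to `a^μ` times the second gives the upper estimate.
-/

open MeasureTheory Real Set

-- Raise `u / p + 1 ≤ exp (u / p)` to the power `p`.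
lemma rpow_mul_exp_neg_le {p u : ℝ} (hp : 0 < p) (hu : 0 ≤ u) : u ^ p * exp (-u) ≤ p ^ p := by
  have h : (u / p) ^ p ≤ exp u :=
    calc (u / p) ^ p ≤ exp (u / p) ^ p :=
          rpow_le_rpow (by positivity) (by linarith [add_one_le_exp (u / p)]) hp.le
      _ = exp u := by rw [← exp_mul, div_mul_cancel₀ _ hp.ne']
  rw [div_rpow hu hp.le, div_le_iff₀ (by positivity)] at h
  rw [exp_neg, ← div_eq_mul_inv, div_le_iff₀ (exp_pos u)]
  linarith [mul_comm (exp u) (p ^ p)]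

lemma rpow_neg_mul_exp_neg_div_le {p a s : ℝ} (hp : 0 < p) (ha : 0 < a) (hs : 0 < s) :
    s ^ (-p) * exp (-a / (2 * s)) ≤ (2 * p / a) ^ p := by
  have hs' : s ^ (-p) = (2 / a) ^ p * (a / (2 * s)) ^ p := by
    rw [← mul_rpow (by positivity) (by positivity), rpow_neg hs.le, ← inv_rpow hs.le]
    congr 1
    field_simp
  calc s ^ (-p) * exp (-a / (2 * s))
      = (2 / a) ^ p * ((a / (2 * s)) ^ p * exp (-(a / (2 * s)))) := by
        rw [hs', neg_div, mul_assoc]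
    _ ≤ (2 / a) ^ p * p ^ p := by gcongr; exact rpow_mul_exp_neg_le hp (by positivity)
    _ = (2 * p / a) ^ p := by rw [← mul_rpow (by positivity) hp.le]; ring_nf

lemma rpow_mul_exp_neg_div_le_rpow {q a s : ℝ} (ha : 0 ≤ a) (hs : 0 < s) :
    s ^ q * exp (-a / (2 * s)) ≤ s ^ q :=
  mul_le_of_le_one_right (by positivity)
    (exp_le_one_iff.mpr (div_nonpos_of_nonpos_of_nonneg (by linarith) (by positivity)))

lemma integral_Ioi_rpow_neg_sub_one {μ b : ℝ} (hμ : 0 < μ) (hb : 0 < b) :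
    ∫ s in Ioi b, s ^ (-μ - 1) = b ^ (-μ) / μ := by
  rw [integral_Ioi_rpow_of_lt (by linarith) hb, show -μ - 1 + 1 = -μ by ring, neg_div_neg_eq]

lemma integrableOn_Ioi_zero_rpow_mul_exp {μ a : ℝ} (hμ : 0 < μ) (ha : 0 < a) :
    IntegrableOn (fun s => s ^ (-μ - 1) * exp (-a / (2 * s))) (Ioi 0) := by
  have hf : Measurable fun s : ℝ => s ^ (-μ - 1) * exp (-a / (2 * s)) := by fun_prop
  rw [← Ioc_union_Ioi_eq_Ioi ha.le]
  refine IntegrableOn.union ?_ ?_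
  · refine (integrableOn_const (C := (2 * (μ + 1) / a) ^ (μ + 1))
      measure_Ioc_lt_top.ne).mono' hf.aestronglyMeasurable ?_
    filter_upwards [ae_restrict_mem measurableSet_Ioc] with s hs
    have hs0 : 0 < s := hs.1
    rw [norm_of_nonneg (by positivity), show -μ - 1 = -(μ + 1) by ring]
    exact rpow_neg_mul_exp_neg_div_le (by linarith) ha hs0
  · refine (integrableOn_Ioi_rpow_of_lt (show -μ - 1 < -1 by linarith) ha).mono'
      hf.aestronglyMeasurable ?_
    filter_upwards [ae_restrict_mem measurableSet_Ioi] with s (hs : a < s)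
    have hs0 : 0 < s := ha.trans hs
    rw [norm_of_nonneg (by positivity)]
    exact rpow_mul_exp_neg_div_le_rpow ha.le hs0

lemma setIntegral_Ioi_rpow_mul_exp_le_of_le {μ a b b' : ℝ} (hμ : 0 < μ) (ha : 0 < a) (hb : 0 ≤ b)
    (hbb' : b ≤ b') :
    ∫ s in Ioi b', s ^ (-μ - 1) * exp (-a / (2 * s))
      ≤ ∫ s in Ioi b, s ^ (-μ - 1) * exp (-a / (2 * s)) := by
  refine setIntegral_mono_set
    ((integrableOn_Ioi_zero_rpow_mul_exp hμ ha).mono_set (Ioi_subset_Ioi hb)) ?_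
    (Ioi_subset_Ioi hbb').eventuallyLE
  filter_upwards [ae_restrict_mem measurableSet_Ioi] with s (hs : b < s)
  have hs0 : 0 < s := hb.trans_lt hs
  positivity

lemma setIntegral_Ioi_rpow_mul_exp_le {μ a b : ℝ} (hμ : 0 < μ) (ha : 0 < a) (hb : 0 < b) :
    ∫ s in Ioi b, s ^ (-μ - 1) * exp (-a / (2 * s)) ≤ b ^ (-μ) / μ := by
  rw [← integral_Ioi_rpow_neg_sub_one hμ hb]
  exact setIntegral_mono_on
    ((integrableOn_Ioi_zero_rpow_mul_exp hμ ha).mono_set (Ioi_subset_Ioi hb.le))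
    (integrableOn_Ioi_rpow_of_lt (by linarith) hb) measurableSet_Ioi
    fun s hs => rpow_mul_exp_neg_div_le_rpow ha.le (hb.trans hs)

lemma le_setIntegral_Ioi_rpow_mul_exp {μ a b : ℝ} (hμ : 0 < μ) (ha : 0 < a) (hb : 0 < b)
    (hab : a ≤ 2 * b) :
    exp (-1) * (b ^ (-μ) / μ) ≤ ∫ s in Ioi b, s ^ (-μ - 1) * exp (-a / (2 * s)) := by
  rw [← integral_Ioi_rpow_neg_sub_one hμ hb, ← integral_const_mul]
  refine setIntegral_mono_on ((integrableOn_Ioi_rpow_of_lt (by linarith) hb).const_mul _)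
    ((integrableOn_Ioi_zero_rpow_mul_exp hμ ha).mono_set (Ioi_subset_Ioi hb.le))
    measurableSet_Ioi fun s (hs : b < s) => ?_
  have hs0 : 0 < s := hb.trans hs
  rw [mul_comm]
  gcongr
  rw [neg_div, neg_le_neg_iff, div_le_one (by positivity)]
  linarith

lemma setIntegral_Ioi_zero_rpow_mul_exp_le {μ a : ℝ} (hμ : 0 < μ) (ha : 0 < a) :
    ∫ s in Ioi 0, s ^ (-μ - 1) * exp (-a / (2 * s))
      ≤ ((2 * (μ + 1)) ^ (μ + 1) + 1 / μ) * a ^ (-μ) := by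
  have hf := integrableOn_Ioi_zero_rpow_mul_exp hμ ha
  rw [← Ioc_union_Ioi_eq_Ioi ha.le, setIntegral_union (Ioc_disjoint_Ioi le_rfl) measurableSet_Ioi
    (hf.mono_set Ioc_subset_Ioi_self) (hf.mono_set (Ioi_subset_Ioi ha.le))]
  have hnear : ∫ s in Ioc 0 a, s ^ (-μ - 1) * exp (-a / (2 * s))
      ≤ (2 * (μ + 1)) ^ (μ + 1) * a ^ (-μ) :=
    calc ∫ s in Ioc 0 a, s ^ (-μ - 1) * exp (-a / (2 * s))
        ≤ ∫ _ in Ioc 0 a, (2 * (μ + 1) / a) ^ (μ + 1) :=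
          setIntegral_mono_on (hf.mono_set Ioc_subset_Ioi_self)
            (integrableOn_const measure_Ioc_lt_top.ne) measurableSet_Ioc fun s hs => by
              rw [show -μ - 1 = -(μ + 1) by ring]
              exact rpow_neg_mul_exp_neg_div_le (by linarith) ha hs.1
      _ = (2 * (μ + 1)) ^ (μ + 1) * a ^ (-μ) := by
          rw [setIntegral_const, volume_real_Ioc_of_le ha.le, smul_eq_mul,
            div_rpow (by positivity) ha.le, rpow_add ha, rpow_one, rpow_neg ha.le]
          field_simp
          ring
  rw [add_mul, one_div_mul_eq_div]
  exact add_le_add hnear (setIntegral_Ioi_rpow_mul_exp_le hμ ha ha)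

lemma le_setIntegral_Ioi_rpow_mul_exp_div {μ a m : ℝ} (hμ : 0 < μ) (ha : 0 < a) (hm : 0 < m) :
    exp (-1) / μ / (m ^ μ + a ^ μ) ≤ ∫ s in Ioi m, s ^ (-μ - 1) * exp (-a / (2 * s)) := by
  set M := max m a
  have hM : 0 < M := lt_max_of_lt_left hm
  have hMμ : M ^ μ ≤ m ^ μ + a ^ μ := by
    rw [rpow_max hm.le ha.le hμ.le]
    exact max_le (by linarith [rpow_pos_of_pos ha μ]) (by linarith [rpow_pos_of_pos hm μ])
  calc exp (-1) / μ / (m ^ μ + a ^ μ) ≤ exp (-1) / μ / M ^ μ := by gcongr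
    _ = exp (-1) * (M ^ (-μ) / μ) := by rw [rpow_neg hM.le]; ring
    _ ≤ ∫ s in Ioi M, s ^ (-μ - 1) * exp (-a / (2 * s)) :=
        le_setIntegral_Ioi_rpow_mul_exp hμ ha hM (by linarith [le_max_right m a])
    _ ≤ ∫ s in Ioi m, s ^ (-μ - 1) * exp (-a / (2 * s)) :=
        setIntegral_Ioi_rpow_mul_exp_le_of_le hμ ha hm.le (le_max_left m a)

lemma setIntegral_Ioi_rpow_mul_exp_le_div {μ a m : ℝ} (hμ : 0 < μ) (ha : 0 < a) (hm : 0 < m) :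
    ∫ s in Ioi m, s ^ (-μ - 1) * exp (-a / (2 * s))
      ≤ (2 / μ + (2 * (μ + 1)) ^ (μ + 1)) / (m ^ μ + a ^ μ) := by
  set I := ∫ s in Ioi m, s ^ (-μ - 1) * exp (-a / (2 * s))
  have hIm : I ≤ m ^ (-μ) / μ := setIntegral_Ioi_rpow_mul_exp_le hμ ha hm
  have hIa : I ≤ ((2 * (μ + 1)) ^ (μ + 1) + 1 / μ) * a ^ (-μ) :=
    (setIntegral_Ioi_rpow_mul_exp_le_of_le hμ ha le_rfl hm.le).trans
      (setIntegral_Ioi_zero_rpow_mul_exp_le hμ ha)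
  rw [le_div_iff₀ (by positivity)]
  calc I * (m ^ μ + a ^ μ) = m ^ μ * I + a ^ μ * I := by ring
    _ ≤ m ^ μ * (m ^ (-μ) / μ) + a ^ μ * (((2 * (μ + 1)) ^ (μ + 1) + 1 / μ) * a ^ (-μ)) := by
        gcongr
    _ = 2 / μ + (2 * (μ + 1)) ^ (μ + 1) := by
        rw [rpow_neg hm.le, rpow_neg ha.le]
        field_simp
        ring

theorem stmt_10 (μ : ℝ) (hμ : 0 < μ) :
    ∃ c : ℝ, 1 ≤ c ∧ ∀ x t : ℝ, 1 < x → 0 < t →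
      c⁻¹ / ((max t x) ^ μ + (x - 1) ^ (2 * μ))
        ≤ (∫ s in Set.Ici (max t x), s ^ (-μ - 1) * Real.exp (-(x - 1) ^ 2 / (2 * s))) ∧
      (∫ s in Set.Ici (max t x), s ^ (-μ - 1) * Real.exp (-(x - 1) ^ 2 / (2 * s)))
        ≤ c / ((max t x) ^ μ + (x - 1) ^ (2 * μ)) := by
  set K := 2 / μ + (2 * (μ + 1)) ^ (μ + 1)
  set C := 1 + exp 1 * μ + K with hC
  have hK : 0 < K := by positivity
  have hexp : 0 < exp 1 * μ := by positivity
  have hCinv : C⁻¹ ≤ exp (-1) / μ := by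
    rw [exp_neg, inv_div_left, mul_comm]
    exact inv_anti₀ hexp (by linarith)
  refine ⟨C, by linarith, fun x t hx ht => ?_⟩
  have hm : 0 < max t x := lt_max_of_lt_left ht
  have ha : 0 < (x - 1) ^ 2 := by nlinarith
  have hpow : (x - 1) ^ (2 * μ) = ((x - 1) ^ 2) ^ μ := by
    rw [rpow_mul (by linarith), rpow_two]
  rw [integral_Ici_eq_integral_Ioi, hpow]
  have hD : 0 < max t x ^ μ + ((x - 1) ^ 2) ^ μ := by positivity
  exact ⟨(div_le_div_of_nonneg_right hCinv hD.le).trans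
      (le_setIntegral_Ioi_rpow_mul_exp_div hμ ha hm),
    (setIntegral_Ioi_rpow_mul_exp_le_div hμ ha hm).trans
      (div_le_div_of_nonneg_right (by linarith) hD.le)⟩
end

section
/- Let 0 < β < 1. There exists a constant c = c(β) ≥ 1 such that for every x ≥ 2 and every t > x, c⁻¹ · t^{β − 1} ≤ ∫_1^∞ (v(v + x))^{β} / (v · (v(v + x) + t)) dv ≤ c · t^{β − 1}. -/
/-!
Write `w = v (v + x)` and pick a scale `a ≥ 1` with `t ≤ a (a + x) ≤ 2 t`. For `v ≤ a` the
integrand is at most `w ^ β / (v t) ≤ (a + x) ^ β v ^ (β - 1) / t`, for `v ≥ a` at most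
`w ^ (β - 1) / v ≤ (a + x) ^ (β - 1) v ^ (β - 2)`; integrating, both pieces are
`O(t ^ (β - 1))`.
On `[a, 2a]` one has `t ≤ w ≤ 8 t`, so the integrand is at least `t ^ (β - 1) / (18 a)` there,
which gives the lower bound.
-/

open MeasureTheory Real Set

noncomputable def integrand (β x t v : ℝ) : ℝ :=
  (v * (v + x)) ^ β / (v * (v * (v + x) + t))

lemma exists_le_mul_add_le_two_mul {x t : ℝ} (hx : 1 ≤ x) (hxt : x ≤ t) :
    ∃ a, 1 ≤ a ∧ t ≤ a * (a + x) ∧ a * (a + x) ≤ 2 * t := by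
  have ht : 0 ≤ t := by linarith
  have hsq : √t * √t = t := mul_self_sqrt ht
  have hdiv : t / x * x = t := div_mul_cancel₀ t (by positivity)
  refine ⟨min √t (t / x), le_min ?_ ?_, ?_, ?_⟩
  · exact one_le_sqrt.mpr (by linarith)
  · exact (one_le_div (by positivity)).mpr hxt
  · rcases min_cases √t (t / x) with ⟨h, -⟩ | ⟨h, -⟩ <;> rw [h] <;>
      nlinarith [sqrt_nonneg t, sq_nonneg (t / x)]
  · have h₁ : min √t (t / x) * min √t (t / x) ≤ √t * √t :=
      mul_le_mul (min_le_left _ _) (min_le_left _ _) (by positivity) (sqrt_nonneg t)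
    have h₂ : min √t (t / x) * x ≤ t / x * x := by gcongr; exact min_le_right _ _
    nlinarith

section Bounds

variable {β x t a : ℝ}

lemma integrand_nonneg (hx : 0 ≤ x) (ht : 0 ≤ t) {v : ℝ} (hv : 0 < v) :
    0 ≤ integrand β x t v := by
  unfold integrand; positivity

lemma measurable_integrand : Measurable (integrand β x t) := by
  unfold integrand; fun_prop

lemma integrand_le_of_le (hβ : 0 ≤ β) (hx : 0 ≤ x) (ht : 0 < t) {v : ℝ} (hv : 0 < v)
    (hva : v ≤ a) : integrand β x t v ≤ (a + x) ^ β / t * v ^ (β - 1) := by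
  have hw : 0 < v * (v + x) := by positivity
  calc integrand β x t v ≤ (v * (a + x)) ^ β / (v * t) :=
        div_le_div₀ (rpow_nonneg (mul_nonneg hv.le (by linarith)) _)
          (rpow_le_rpow hw.le (by gcongr) hβ) (by positivity)
          (mul_le_mul_of_nonneg_left (by linarith) hv.le)
    _ = (a + x) ^ β / t * v ^ (β - 1) := by
        rw [mul_rpow hv.le (by linarith), rpow_sub_one hv.ne']
        field_simp

lemma integrand_le_of_ge (hβ : β ≤ 1) (hx : 0 ≤ x) (ht : 0 ≤ t) (ha : 0 < a) {v : ℝ}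
    (hav : a ≤ v) : integrand β x t v ≤ (a + x) ^ (β - 1) * v ^ (β - 2) := by
  have hv : 0 < v := ha.trans_le hav
  have hw : 0 < v * (v + x) := by positivity
  calc integrand β x t v ≤ (v * (v + x)) ^ β / (v * (v * (v + x))) := by
        unfold integrand
        gcongr
        linarith
    _ = (v * (v + x)) ^ (β - 1) / v := by
        rw [rpow_sub_one hw.ne']
        field_simp
    _ ≤ ((a + x) * v) ^ (β - 1) / v :=
        div_le_div_of_nonneg_right
          (rpow_le_rpow_of_nonpos (by positivity) (by nlinarith) (by linarith)) hv.le
    _ = (a + x) ^ (β - 1) * v ^ (β - 2) := by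
        rw [mul_rpow (by positivity) hv.le, show β - 2 = β - 1 - 1 by ring,
          rpow_sub_one hv.ne' (β - 1)]
        ring

lemma le_integrand (hβ : 0 ≤ β) (hx : 0 ≤ x) (ht : 0 < t) (ha : 0 < a)
    (hta : t ≤ a * (a + x)) (hat : a * (a + x) ≤ 2 * t) {v : ℝ} (hv : v ∈ Icc a (2 * a)) :
    t ^ (β - 1) / (18 * a) ≤ integrand β x t v := by
  obtain ⟨hav, hva⟩ := hv
  have hv : 0 < v := ha.trans_le hav
  have hw : t ≤ v * (v + x) := hta.trans (by gcongr)
  have hw' : v * (v + x) ≤ 8 * t := by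
    nlinarith [mul_le_mul hva (by linarith : v + x ≤ 2 * a + x)]
  calc t ^ (β - 1) / (18 * a) = t ^ β / (2 * a * (8 * t + t)) := by
        rw [rpow_sub_one ht.ne']
        field_simp
        ring
    _ ≤ integrand β x t v :=
        div_le_div₀ (by positivity) (rpow_le_rpow ht.le hw hβ) (by positivity)
          (mul_le_mul hva (by linarith) (by positivity) (by linarith))

lemma integrableOn_Icc_integrand (hx : 0 ≤ x) (ht : 0 ≤ t) {b : ℝ} (ha : 0 < a) :
    IntegrableOn (integrand β x t) (Icc a b) := by
  refine ContinuousOn.integrableOn_Icc (ContinuousOn.div ?_ (by fun_prop) ?_)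
  · refine ContinuousOn.rpow_const (by fun_prop) fun v hv => Or.inl ?_
    have : 0 < v := ha.trans_le hv.1
    positivity
  · intro v hv
    have : 0 < v := ha.trans_le hv.1
    positivity

lemma integrableOn_Ioi_integrand (hβ : β < 1) (hx : 0 ≤ x) (ht : 0 ≤ t) (ha : 0 < a) :
    IntegrableOn (integrand β x t) (Ioi a) := by
  refine ((integrableOn_Ioi_rpow_of_lt (a := β - 2) (by linarith) ha).const_mul
    ((a + x) ^ (β - 1))).mono'
    measurable_integrand.aestronglyMeasurable.restrict ?_
  filter_upwards [ae_restrict_mem measurableSet_Ioi] with v hv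
  rw [norm_of_nonneg (integrand_nonneg hx ht (ha.trans hv))]
  exact integrand_le_of_ge hβ.le hx ht ha hv.le

lemma setIntegral_Icc_rpow_sub_one_le (hβ : 0 < β) (ha : 1 ≤ a) :
    ∫ v in Icc 1 a, v ^ (β - 1) ≤ a ^ β / β := by
  rw [integral_Icc_eq_integral_Ioc, ← intervalIntegral.integral_of_le ha,
    integral_rpow (Or.inl (by linarith)), sub_add_cancel, one_rpow]
  gcongr
  linarith

lemma setIntegral_Icc_integrand_le (hβ₀ : 0 < β) (hβ₁ : β ≤ 1) (hx : 0 ≤ x) (ht : 0 < t)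
    (ha : 1 ≤ a) (hat : a * (a + x) ≤ 2 * t) :
    ∫ v in Icc 1 a, integrand β x t v ≤ 2 / β * t ^ (β - 1) := by
  have hpow : (2 : ℝ) ^ β ≤ 2 := by
    simpa using rpow_le_rpow_of_exponent_le one_le_two hβ₁
  calc ∫ v in Icc 1 a, integrand β x t v ≤ ∫ v in Icc 1 a, (a + x) ^ β / t * v ^ (β - 1) :=
        setIntegral_mono_on (integrableOn_Icc_integrand hx ht.le one_pos)
          ((ContinuousOn.rpow_const continuousOn_id fun v hv =>
            Or.inl (by simp only [id]; linarith [hv.1])).integrableOn_Icc.const_mul _)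
          measurableSet_Icc fun v hv => integrand_le_of_le hβ₀.le hx ht (by linarith [hv.1]) hv.2
    _ = (a + x) ^ β / t * ∫ v in Icc 1 a, v ^ (β - 1) := integral_const_mul _ _
    _ ≤ (a + x) ^ β / t * (a ^ β / β) := by
        gcongr
        exact setIntegral_Icc_rpow_sub_one_le hβ₀ ha
    _ = (a * (a + x)) ^ β / t / β := by
        rw [mul_rpow (by linarith) (by linarith)]
        ring
    _ ≤ (2 * t) ^ β / t / β := by gcongr
    _ ≤ 2 * t ^ β / t / β := by
        rw [mul_rpow zero_le_two ht.le]
        gcongr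
    _ = 2 / β * t ^ (β - 1) := by
        rw [rpow_sub_one ht.ne']
        ring

lemma setIntegral_Ioi_integrand_le (hβ : β < 1) (hx : 0 ≤ x) (ht : 0 < t) (ha : 0 < a)
    (hta : t ≤ a * (a + x)) :
    ∫ v in Ioi a, integrand β x t v ≤ t ^ (β - 1) / (1 - β) := by
  have hβ' : 0 < 1 - β := by linarith
  calc ∫ v in Ioi a, integrand β x t v ≤ ∫ v in Ioi a, (a + x) ^ (β - 1) * v ^ (β - 2) :=
        setIntegral_mono_on (integrableOn_Ioi_integrand hβ hx ht.le ha)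
          ((integrableOn_Ioi_rpow_of_lt (a := β - 2) (by linarith) ha).const_mul _)
          measurableSet_Ioi
          fun v hv => integrand_le_of_ge hβ.le hx ht.le ha (le_of_lt hv)
    _ = (a * (a + x)) ^ (β - 1) / (1 - β) := by
        rw [integral_const_mul, integral_Ioi_rpow_of_lt (by linarith) ha,
          mul_rpow ha.le (by linarith), show β - 2 + 1 = β - 1 by ring, neg_div, ← div_neg,
          neg_sub]
        ring
    _ ≤ t ^ (β - 1) / (1 - β) :=
        div_le_div_of_nonneg_right (rpow_le_rpow_of_nonpos ht hta (by linarith)) hβ'.le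

lemma le_setIntegral_Icc_integrand (hβ : 0 ≤ β) (hx : 0 ≤ x) (ht : 0 < t) (ha : 0 < a)
    (hta : t ≤ a * (a + x)) (hat : a * (a + x) ≤ 2 * t) :
    t ^ (β - 1) / 18 ≤ ∫ v in Icc a (2 * a), integrand β x t v := by
  calc t ^ (β - 1) / 18 = ∫ _ in Icc a (2 * a), t ^ (β - 1) / (18 * a) := by
        rw [setIntegral_const, volume_real_Icc_of_le (by linarith), smul_eq_mul]
        field_simp
        ring
    _ ≤ ∫ v in Icc a (2 * a), integrand β x t v :=
        setIntegral_mono_on (integrableOn_const (by simp) (by simp))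
          (integrableOn_Icc_integrand hx ht.le ha) measurableSet_Icc
          fun v hv => le_integrand hβ hx ht ha hta hat hv

lemma integrableOn_Ici_integrand (hβ : β < 1) (hx : 0 ≤ x) (ht : 0 ≤ t) :
    IntegrableOn (integrand β x t) (Ici 1) :=
  (integrableOn_Ici_iff_integrableOn_Ioi (by simp)).mpr <|
    integrableOn_Ioi_integrand hβ hx ht one_pos

lemma setIntegral_Ici_integrand_le (hβ₀ : 0 < β) (hβ₁ : β < 1) (hx : 0 ≤ x) (ht : 0 < t)
    (ha : 1 ≤ a) (hta : t ≤ a * (a + x)) (hat : a * (a + x) ≤ 2 * t) :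
    ∫ v in Ici 1, integrand β x t v ≤ (2 / β + 1 / (1 - β)) * t ^ (β - 1) := by
  have hIoi := integrableOn_Ioi_integrand hβ₁ hx ht.le (one_pos.trans_le ha)
  rw [← Icc_union_Ioi_eq_Ici ha, setIntegral_union
    ((Iic_disjoint_Ioi le_rfl).mono_left Icc_subset_Iic_self) measurableSet_Ioi
    (integrableOn_Icc_integrand hx ht.le one_pos) hIoi]
  have h₁ := setIntegral_Icc_integrand_le hβ₀ hβ₁.le hx ht ha hat
  have h₂ := setIntegral_Ioi_integrand_le hβ₁ hx ht (one_pos.trans_le ha) hta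
  linarith [show (2 / β + 1 / (1 - β)) * t ^ (β - 1)
    = 2 / β * t ^ (β - 1) + t ^ (β - 1) / (1 - β) by ring]

lemma le_setIntegral_Ici_integrand (hβ₀ : 0 < β) (hβ₁ : β < 1) (hx : 0 ≤ x) (ht : 0 < t)
    (ha : 1 ≤ a) (hta : t ≤ a * (a + x)) (hat : a * (a + x) ≤ 2 * t) :
    t ^ (β - 1) / 18 ≤ ∫ v in Ici 1, integrand β x t v := by
  refine (le_setIntegral_Icc_integrand hβ₀.le hx ht (one_pos.trans_le ha) hta hat).trans
    (setIntegral_mono_set (integrableOn_Ici_integrand hβ₁ hx ht.le) ?_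
      (Icc_subset_Ici_self.trans (Ici_subset_Ici.mpr ha)).eventuallyLE)
  filter_upwards [ae_restrict_mem measurableSet_Ici] with v hv
  exact integrand_nonneg hx ht.le (one_pos.trans_le hv)

end Bounds

theorem stmt_17 (β : ℝ) (hβ0 : 0 < β) (hβ1 : β < 1) :
    ∃ c : ℝ, 1 ≤ c ∧ ∀ x t : ℝ, 2 ≤ x → x < t →
      c⁻¹ * t ^ (β - 1)
        ≤ (∫ v in Set.Ici (1:ℝ), (v * (v + x)) ^ β / (v * (v * (v + x) + t))) ∧
      (∫ v in Set.Ici (1:ℝ), (v * (v + x)) ^ β / (v * (v * (v + x) + t)))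
        ≤ c * t ^ (β - 1) := by
  have hC : 0 < 2 / β + 1 / (1 - β) := by
    have : 0 < 1 - β := by linarith
    positivity
  refine ⟨18 + (2 / β + 1 / (1 - β)), by linarith, fun x t hx hxt => ?_⟩
  change _ ≤ ∫ v in Ici 1, integrand β x t v ∧ ∫ v in Ici 1, integrand β x t v ≤ _
  have hx₀ : 0 ≤ x := by linarith
  have ht : 0 < t := by linarith
  obtain ⟨a, ha, hta, hat⟩ := exists_le_mul_add_le_two_mul (by linarith) hxt.le
  constructor
  · calc (18 + (2 / β + 1 / (1 - β)))⁻¹ * t ^ (β - 1) ≤ 18⁻¹ * t ^ (β - 1) := by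
          gcongr
          linarith
      _ = t ^ (β - 1) / 18 := by ring
      _ ≤ _ := le_setIntegral_Ici_integrand hβ0 hβ1 hx₀ ht ha hta hat
  · calc _ ≤ (2 / β + 1 / (1 - β)) * t ^ (β - 1) :=
          setIntegral_Ici_integrand_le hβ0 hβ1 hx₀ ht ha hta hat
      _ ≤ (18 + (2 / β + 1 / (1 - β))) * t ^ (β - 1) :=
          mul_le_mul_of_nonneg_right (by linarith) (by positivity)
end
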